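/- arXiv:1605.09360 — 6 statements merged into one kernel-verified Lean document; each statement's English description precedes it below -/
import Mathlib

section
/- Let F be a number field with adele ring A, and let t ∈ A^× be an idele. Then the number of nonzero field elements x ∈ F^× satisfying |x|_v ≤ |t_v|_v for all places v is at most C·|t|_A, where |t|_A is the idelic module and C is a constant depending only on F. -/
/-!
If `x ≠ x'` both satisfy the bounds, so does `x - x'` at the finite places, and the product formula
gives `∏_w |x - x'|_w ^ (mult w) ≥ P := ∏_{v ∈ S} N(v) ^ (e v)`. Cut the box `{|z_w| ≤ y_w}` into
square cells of side `τ y_w`, where `(2τ)^n Y < P` for `Y := ∏_w y_w ^ (mult w)`: then no cell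
contains two of the points. Taking `τ = (P / Y)^(1/n) / 4` (at most `1/4`, since a single point
already forces `P ≤ Y`) leaves at most `(3 / τ)^n = 12^n Y / P` cells.
-/

open NumberField IsDedekindDomain

namespace NumberField

theorem FinitePlace.norm_embedding_le_of_valuation_le {K R : Type*} [Field K] [CommRing R]
    [Algebra R K] [IsDedekindDomain R] [IsFractionRing R K] [Module.Finite ℤ R] [Module.Free ℤ R]
    (v : HeightOneSpectrum R) {x : K} {k : ℤ}
    (h : v.valuation K x ≤
      ((Multiplicative.ofAdd (-k) : Multiplicative ℤ) : WithZero (Multiplicative ℤ))) :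
    ‖FinitePlace.embedding v x‖ ≤ (Ideal.absNorm v.asIdeal : ℝ) ^ (-k) := by
  rw [FinitePlace.norm_embedding']
  have hmono :=
    (WithZeroMulInt.toNNReal_strictMono (HeightOneSpectrum.one_lt_absNorm_nnreal v)).monotone h
  rw [WithZeroMulInt.toNNReal_neg_apply _ WithZero.coe_ne_zero] at hmono
  exact_mod_cast hmono

theorem prod_absNorm_zpow_le_prod_infinitePlace {F : Type*} [Field F] [NumberField F]
    {S : Finset (HeightOneSpectrum (𝓞 F))} {e : HeightOneSpectrum (𝓞 F) → ℤ}
    (he : ∀ v ∉ S, e v = 0) {x : F} (hx : x ≠ 0)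
    (hval : ∀ v : HeightOneSpectrum (𝓞 F),
      v.valuation F x ≤ ((Multiplicative.ofAdd (-(e v)) : Multiplicative ℤ) :
        WithZero (Multiplicative ℤ))) :
    ∏ v ∈ S, (Ideal.absNorm v.asIdeal : ℝ) ^ e v ≤ ∏ w : InfinitePlace F, w x ^ w.mult := by
  have hsupp : (fun v => (Ideal.absNorm v.asIdeal : ℝ) ^ (-e v)).mulSupport ⊆ S := by
    intro v hv
    by_contra hvS
    exact hv (by simp [he v hvS])
  have hfin : ∏ᶠ w : FinitePlace F, w x ≤ ∏ v ∈ S, (Ideal.absNorm v.asIdeal : ℝ) ^ (-e v) := by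
    rw [← finprod_comp_equiv FinitePlace.equivHeightOneSpectrum.symm,
      ← finprod_eq_prod_of_mulSupport_subset _ hsupp]
    refine finprod_le_finprod ((FinitePlace.hasFiniteMulSupport hx).comp_of_injective
      (Equiv.injective _)) (fun v => apply_nonneg _ _) (S.finite_toSet.subset hsupp) fun v => ?_
    simpa only [FinitePlace.equivHeightOneSpectrum_symm_apply] using
      FinitePlace.norm_embedding_le_of_valuation_le v (hval v)
  have hpos : 0 < ∏ᶠ w : FinitePlace F, w x :=
    (finprod_nonneg fun w => apply_nonneg w x).lt_of_ne'
      (right_ne_zero_of_mul_eq_one (prod_abs_eq_one hx))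
  calc ∏ v ∈ S, (Ideal.absNorm v.asIdeal : ℝ) ^ e v
      = (∏ v ∈ S, (Ideal.absNorm v.asIdeal : ℝ) ^ (-e v))⁻¹ := by
        simp [← Finset.prod_inv_distrib, zpow_neg]
    _ ≤ (∏ᶠ w : FinitePlace F, w x)⁻¹ := inv_anti₀ hpos hfin
    _ = ∏ w : InfinitePlace F, w x ^ w.mult :=
        (eq_inv_of_mul_eq_one_left (prod_abs_eq_one hx)).symm

theorem InfinitePlace.prod_mul_pow_mult {F : Type*} [Field F] [NumberField F] (c : ℝ)
    (b : InfinitePlace F → ℝ) :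
    ∏ w, (c * b w) ^ w.mult = c ^ Module.finrank ℚ F * ∏ w, b w ^ w.mult := by
  simp_rw [mul_pow, Finset.prod_mul_distrib, Finset.prod_pow_eq_pow_sum,
    InfinitePlace.sum_mult_eq]

end NumberField

noncomputable def gridCell (s : ℝ) (z : ℂ) : ℤ × ℤ := (⌊z.re / s⌋, ⌊z.im / s⌋)

theorem abs_sub_lt_of_floor_div_eq {a b s : ℝ} (hs : 0 < s) (h : ⌊a / s⌋ = ⌊b / s⌋) :
    |a - b| < s := by
  have := Int.abs_sub_lt_one_of_floor_eq_floor h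
  rwa [← sub_div, abs_div, abs_of_pos hs, div_lt_one hs] at this

theorem norm_sub_lt_of_gridCell_eq {s : ℝ} {z z' : ℂ} (hs : 0 < s)
    (h : gridCell s z = gridCell s z') : ‖z - z'‖ < 2 * s := by
  obtain ⟨hre, him⟩ := Prod.ext_iff.1 h
  calc ‖z - z'‖ ≤ |(z - z').re| + |(z - z').im| := Complex.norm_le_abs_re_add_abs_im _
    _ < s + s := by
      rw [Complex.sub_re, Complex.sub_im]
      exact add_lt_add (abs_sub_lt_of_floor_div_eq hs hre) (abs_sub_lt_of_floor_div_eq hs him)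
    _ = 2 * s := by ring

theorem floor_div_mem_Icc {t r s : ℝ} (hs : 0 < s) (ht : |t| ≤ r) :
    ⌊t / s⌋ ∈ Finset.Icc (-(⌊r / s⌋₊ : ℤ) - 1) ⌊r / s⌋₊ := by
  have hr : 0 ≤ r / s := div_nonneg ((abs_nonneg t).trans ht) hs.le
  have hts : |t / s| ≤ r / s := by
    rw [abs_div, abs_of_pos hs]
    exact div_le_div_of_nonneg_right ht hs.le
  rw [abs_le] at hts
  rw [Finset.mem_Icc, Int.le_floor, Int.natCast_floor_eq_floor hr]
  refine ⟨?_, Int.floor_mono hts.2⟩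
  have hK := Int.lt_floor_add_one (r / s)
  push_cast
  linarith

section CellCount

variable {F : Type*} [Field F]

open Classical in
/-- With `K = ⌊r / s⌋₊`, this contains the grid cells of mesh `s` meeting the image of
`{x | w x ≤ r}` under `w.embedding`; at a real place that image lies on the real axis. -/
noncomputable def cellBox (K : ℕ) (w : InfinitePlace F) : Finset (ℤ × ℤ) :=
  Finset.Icc (-(K : ℤ) - 1) K ×ˢ (if w.IsReal then {0} else Finset.Icc (-(K : ℤ) - 1) K)

theorem card_cellBox (K : ℕ) (w : InfinitePlace F) :
    (cellBox K w).card = (2 * K + 2) ^ w.mult := by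
  have hIcc : (Finset.Icc (-(K : ℤ) - 1) K).card = 2 * K + 2 := by
    rw [Int.card_Icc]
    omega
  by_cases hw : w.IsReal
  · simp [cellBox, hw, hIcc, InfinitePlace.mult]
  · simp [cellBox, hw, hIcc, InfinitePlace.mult, sq]

theorem gridCell_mem_cellBox {s r : ℝ} (hs : 0 < s) {w : InfinitePlace F} {x : F}
    (hx : w x ≤ r) : gridCell s (w.embedding x) ∈ cellBox ⌊r / s⌋₊ w := by
  have hnorm : ‖w.embedding x‖ ≤ r := (w.norm_embedding_eq x).trans_le hx
  refine Finset.mem_product.2 ⟨floor_div_mem_Icc hs ((Complex.abs_re_le_norm _).trans hnorm), ?_⟩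
  by_cases hw : w.IsReal
  · have him : (w.embedding x).im = 0 := by
      rw [← InfinitePlace.embedding_of_isReal_apply hw, Complex.ofReal_im]
    simp [gridCell, hw, him]
  · simpa [gridCell, cellBox, hw] using
      floor_div_mem_Icc hs ((Complex.abs_im_le_norm _).trans hnorm)

variable [NumberField F]

theorem natCard_le_of_pairwise_lt_prod_sub {X : Set F} {y : InfinitePlace F → ℝ}
    (hy : ∀ w, 0 < y w) (hX : ∀ x ∈ X, ∀ w, w x ≤ y w) {τ : ℝ} (hτ : 0 < τ)
    (hsep : X.Pairwise fun x x' => (2 * τ) ^ Module.finrank ℚ F * ∏ w, y w ^ w.mult <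
      ∏ w : InfinitePlace F, w (x - x') ^ w.mult) :
    Nat.card X ≤ (2 * ⌊τ⁻¹⌋₊ + 2) ^ Module.finrank ℚ F := by
  have hmesh : ∀ w, y w / (τ * y w) = τ⁻¹ := fun w => by field_simp [(hy w).ne']
  let cell : X → (w : InfinitePlace F) → cellBox ⌊τ⁻¹⌋₊ w := fun x w =>
    ⟨gridCell (τ * y w) (w.embedding x),
      hmesh w ▸ gridCell_mem_cellBox (mul_pos hτ (hy w)) (hX x x.2 w)⟩
  have hcell : Function.Injective cell := by
    rintro ⟨x, hx⟩ ⟨x', hx'⟩ hxx'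
    by_contra hne
    refine (hsep hx hx' fun h => hne (Subtype.ext h)).not_ge ?_
    rw [← InfinitePlace.prod_mul_pow_mult]
    refine Finset.prod_le_prod (fun w _ => by positivity) fun w _ =>
      pow_le_pow_left₀ (apply_nonneg _ _) ?_ _
    rw [← w.norm_embedding_eq, map_sub, mul_assoc]
    exact (norm_sub_lt_of_gridCell_eq (mul_pos hτ (hy w))
      (congrArg Subtype.val (congrFun hxx' w))).le
  calc Nat.card X ≤ Nat.card ((w : InfinitePlace F) → cellBox ⌊τ⁻¹⌋₊ w) :=
        Nat.card_le_card_of_injective cell hcell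
    _ = ∏ w : InfinitePlace F, (2 * ⌊τ⁻¹⌋₊ + 2) ^ w.mult := by
        simp [Nat.card_pi, card_cellBox]
    _ = (2 * ⌊τ⁻¹⌋₊ + 2) ^ Module.finrank ℚ F := by
        rw [Finset.prod_pow_eq_pow_sum, InfinitePlace.sum_mult_eq]

theorem natCard_le_of_pairwise_le_prod_sub {X : Set F} {y : InfinitePlace F → ℝ}
    (hy : ∀ w, 0 < y w) (hX : ∀ x ∈ X, ∀ w, w x ≤ y w) {P : ℝ} (hP : 0 < P)
    (hPY : P ≤ ∏ w, y w ^ w.mult)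
    (hsep : X.Pairwise fun x x' => P ≤ ∏ w : InfinitePlace F, w (x - x') ^ w.mult) :
    (Nat.card X : ℝ) ≤ 12 ^ Module.finrank ℚ F * (∏ w, y w ^ w.mult) / P := by
  set n := Module.finrank ℚ F
  set Y := ∏ w, y w ^ w.mult
  have hn : 0 < n := Module.finrank_pos
  have hY : 0 < Y := Finset.prod_pos fun w _ => pow_pos (hy w) _
  set ρ := (P / Y) ^ (n : ℝ)⁻¹
  have hρ : 0 < ρ := Real.rpow_pos_of_pos (div_pos hP hY) _
  have hρ1 : ρ ≤ 1 := Real.rpow_le_one (div_pos hP hY).le ((div_le_one hY).2 hPY) (by positivity)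
  have hρn : ρ ^ n = P / Y := Real.rpow_inv_natCast_pow (div_pos hP hY).le hn.ne'
  have hmesh : (2 * (ρ / 4)) ^ n * Y < P := by
    calc (2 * (ρ / 4)) ^ n * Y = P / 2 ^ n := by
          rw [show 2 * (ρ / 4) = ρ / 2 by ring, div_pow, hρn]
          field_simp
      _ < P := div_lt_self hP (one_lt_pow₀ one_lt_two hn.ne')
  have hcount := natCard_le_of_pairwise_lt_prod_sub hy hX (by positivity : 0 < ρ / 4)
    fun x hx x' hx' hne => hmesh.trans_le (hsep hx hx' hne)
  have hfloor : ((2 * ⌊(ρ / 4)⁻¹⌋₊ + 2 : ℕ) : ℝ) ≤ 12 / ρ := by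
    have hK := Nat.floor_le (inv_nonneg.2 (by positivity : (0 : ℝ) ≤ ρ / 4))
    have h4 : (4 : ℝ) ≤ 4 / ρ := le_div_self (by norm_num) hρ hρ1
    rw [inv_div] at hK ⊢
    push_cast
    linarith [show 12 / ρ = 3 * (4 / ρ) by ring]
  calc (Nat.card X : ℝ) ≤ ((2 * ⌊(ρ / 4)⁻¹⌋₊ + 2 : ℕ) : ℝ) ^ n := by exact_mod_cast hcount
    _ ≤ (12 / ρ) ^ n := pow_le_pow_left₀ (Nat.cast_nonneg _) hfloor n
    _ = 12 ^ n * Y / P := by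
        rw [div_pow, hρn]
        field_simp

end CellCount

/-- (Adelic counting, Lemma 6(a).) Let `F` be a number field. An idele
`t ∈ 𝔸ˣ` is described by its local modules: positive real numbers `(y w)^(mult w)` at the
infinite places `w`, and integers `e v` (the valuations of `t`), zero outside a finite set
`S`, at the finite places `v`; its idelic module is
`|t|_𝔸 = ∏_w (y w)^(mult w) · ∏_{v ∈ S} (N v)^(-e v)`.
The number of `x ∈ F^×` with `|x|_v ≤ |t_v|_v` at every place `v` is `≪_F |t|_𝔸`. -/
theorem card_field_elements_le_module (F : Type*) [Field F] [NumberField F] :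
    ∃ C : ℝ, 0 < C ∧
      ∀ (y : InfinitePlace F → ℝ), (∀ w, 0 < y w) →
      ∀ (S : Finset (HeightOneSpectrum (𝓞 F))) (e : HeightOneSpectrum (𝓞 F) → ℤ),
        (∀ v ∉ S, e v = 0) →
        (Nat.card {x : F // x ≠ 0 ∧
            (∀ w : InfinitePlace F, (w x) ^ w.mult ≤ (y w) ^ w.mult) ∧
            (∀ v : HeightOneSpectrum (𝓞 F),
              v.valuation F x ≤ ((Multiplicative.ofAdd (-(e v)) : Multiplicative ℤ) :
                WithZero (Multiplicative ℤ)))} : ℝ) ≤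
          C * (∏ w : InfinitePlace F, (y w) ^ w.mult) *
            ∏ v ∈ S, (Ideal.absNorm v.asIdeal : ℝ) ^ (-(e v)) := by
  refine ⟨12 ^ Module.finrank ℚ F, by positivity, fun y hy S e he => ?_⟩
  set X : Set F := {x | x ≠ 0 ∧ (∀ w : InfinitePlace F, w x ^ w.mult ≤ y w ^ w.mult) ∧
    ∀ v : HeightOneSpectrum (𝓞 F), v.valuation F x ≤
      ((Multiplicative.ofAdd (-(e v)) : Multiplicative ℤ) : WithZero (Multiplicative ℤ))}
  set P := ∏ v ∈ S, (Ideal.absNorm v.asIdeal : ℝ) ^ e v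
  have hP : 0 < P := Finset.prod_pos fun v _ =>
    zpow_pos (by exact_mod_cast zero_lt_one.trans (HeightOneSpectrum.one_lt_absNorm v)) _
  have hX : ∀ x ∈ X, ∀ w, w x ≤ y w := fun x hx w =>
    (pow_le_pow_iff_left₀ (apply_nonneg _ _) (hy w).le w.mult_ne_zero).1 (hx.2.1 w)
  have hsep : X.Pairwise fun x x' => P ≤ ∏ w : InfinitePlace F, w (x - x') ^ w.mult :=
    fun x hx x' hx' hne => prod_absNorm_zpow_le_prod_infinitePlace he (sub_ne_zero.2 hne)
      fun v => (v.valuation F).map_sub_le (hx.2.2 v) (hx'.2.2 v)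
  change (Nat.card X : ℝ) ≤ _
  rw [show ∏ v ∈ S, (Ideal.absNorm v.asIdeal : ℝ) ^ (-(e v)) = P⁻¹ by
    simp only [P, zpow_neg, Finset.prod_inv_distrib], ← div_eq_mul_inv]
  rcases X.eq_empty_or_nonempty with hempty | ⟨x₀, hx₀⟩
  · rw [hempty, Nat.card_of_isEmpty, Nat.cast_zero]
    exact div_nonneg (mul_nonneg (by positivity)
      (Finset.prod_nonneg fun w _ => (pow_pos (hy w) _).le)) hP.le
  · have hPY : P ≤ ∏ w, y w ^ w.mult :=
      (prod_absNorm_zpow_le_prod_infinitePlace he hx₀.1 hx₀.2.2).trans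
        (Finset.prod_le_prod (fun w _ => pow_nonneg (apply_nonneg _ _) _) fun w _ => hx₀.2.1 w)
    exact natCard_le_of_pairwise_le_prod_sub hy hX hP hPY hsep
end

section
/- Let F be a number field with r = r_1 + r_2 archimedean places. For every ε > 0 there is a constant C_ε depending only on F and ε such that for every idele t ∈ A^×, the number of x ∈ F^× satisfying |x|_v ≤ |t_v|_v for all archimedean v and |x|_v = |t_v|_v for all non-archimedean v is at most C_ε·|t|_A^ε. -/
/-!
Fix one `x₀` in the set being counted. Any other element `x` has the same valuation as `x₀` at
every finite place, so `x = u x₀` for a unit `u`, and the archimedean bounds give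
`w u ≤ y w / w x₀` at every infinite place `w`. By the product formula
`∏_w (y w / w x₀) ^ mult w = |t|_𝔸`, and since `∑_w mult w * log (w u) = 0` while every term is
at most `mult w * log (y w / w x₀) ≥ 0`, the logarithmic embedding of `u` has norm at most
`log |t|_𝔸`. The coordinates of `u` in a fundamental system of units are linear functions of its
logarithmic embedding, so there are `O((1 + log |t|_𝔸) ^ (r - 1))` such units, which is
`O_ε(|t|_𝔸 ^ ε)`.
-/

open NumberField IsDedekindDomain NumberField.Units NumberField.Units.dirichletUnitTheorem

theorem Module.Basis.exists_norm_equivFun_le_mul_norm {𝕜 E ι : Type*}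
    [NontriviallyNormedField 𝕜] [CompleteSpace 𝕜] [NormedAddCommGroup E] [NormedSpace 𝕜 E]
    [Fintype ι] (b : Module.Basis ι 𝕜 E) :
    ∃ K, 0 ≤ K ∧ ∀ (x : E) (i : ι), ‖b.equivFun x i‖ ≤ K * ‖x‖ :=
  let T : E →L[𝕜] ι → 𝕜 := b.equivFunL
  ⟨‖T‖, norm_nonneg T, fun x i => (norm_le_pi_norm (T x) i).trans (T.le_opNorm x)⟩

theorem mem_Icc_neg_floor_of_abs_le {ι : Type*} {B : ℝ} {f : ι → ℤ}
    (hf : ∀ i, |(f i : ℝ)| ≤ B) : f ∈ Set.Icc (fun _ => -⌊B⌋) (fun _ => ⌊B⌋) :=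
  ⟨fun i => neg_le.mpr (Int.le_floor.mpr (by push_cast; linarith [abs_le.mp (hf i)])),
    fun i => Int.le_floor.mpr (by linarith [abs_le.mp (hf i)])⟩

instance {ι : Type*} [Fintype ι] (B : ℝ) : Finite {f : ι → ℤ // ∀ i, |(f i : ℝ)| ≤ B} := by
  classical
  exact ((Set.finite_Icc _ _).subset fun _ => mem_Icc_neg_floor_of_abs_le).to_subtype

theorem card_int_vectors_abs_le {ι : Type*} [Fintype ι] {B : ℝ} (hB : 0 ≤ B) :
    (Nat.card {f : ι → ℤ // ∀ i, |(f i : ℝ)| ≤ B} : ℝ) ≤ (2 * B + 1) ^ Fintype.card ι := by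
  classical
  set N := ⌊B⌋
  have hIcc : ((Finset.Icc (-N) N).card : ℤ) = 2 * N + 1 := by
    rw [Int.card_Icc_of_le _ _ (by linarith [Int.floor_nonneg.mpr hB])]; ring
  calc (Nat.card {f : ι → ℤ // ∀ i, |(f i : ℝ)| ≤ B} : ℝ)
      ≤ (Finset.Icc (fun _ : ι => -N) (fun _ => N)).card := by
        rw [← Nat.card_eq_finsetCard]
        exact_mod_cast Nat.card_le_card_of_injective
          (fun f : {f : ι → ℤ // ∀ i, |(f i : ℝ)| ≤ B} =>
            (⟨f.1, Finset.mem_Icc.mpr (mem_Icc_neg_floor_of_abs_le f.2)⟩ :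
              Finset.Icc (fun _ : ι => -N) (fun _ => N)))
          fun f g h => Subtype.ext (congrArg Subtype.val h :)
    _ = (2 * N + 1 : ℝ) ^ Fintype.card ι := by
        rw [Pi.card_Icc, Finset.prod_const, Finset.card_univ]
        exact_mod_cast congrArg (· ^ Fintype.card ι) hIcc
    _ ≤ (2 * B + 1) ^ Fintype.card ι := by
        gcongr
        exact Int.floor_le B

theorem Finset.abs_le_sum_of_sum_eq_zero {ι α : Type*} [AddCommGroup α] [LinearOrder α]
    [IsOrderedAddMonoid α] {s : Finset ι} {f g : ι → α} (hf : ∑ i ∈ s, f i = 0)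
    (hfg : ∀ i ∈ s, f i ≤ g i) (hg : ∀ i ∈ s, 0 ≤ g i) {i : ι} (hi : i ∈ s) :
    |f i| ≤ ∑ j ∈ s, g j := by
  classical
  refine abs_le'.mpr ⟨(hfg i hi).trans (Finset.single_le_sum hg hi), ?_⟩
  calc -f i = ∑ j ∈ s.erase i, f j := by
        rw [neg_eq_iff_add_eq_zero, Finset.add_sum_erase s f hi, hf]
    _ ≤ ∑ j ∈ s.erase i, g j := Finset.sum_le_sum fun j hj => hfg j (Finset.mem_of_mem_erase hj)
    _ ≤ ∑ j ∈ s, g j := Finset.sum_le_sum_of_subset_of_nonneg (Finset.erase_subset i s)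
        fun j hj _ => hg j hj

theorem exists_mul_add_one_pow_le_mul_exp {a : ℝ} (ha : 0 ≤ a) (d : ℕ) {ε : ℝ} (hε : 0 < ε) :
    ∃ C, 0 < C ∧ ∀ A, 0 ≤ A → (a * A + 1) ^ d ≤ C * Real.exp (ε * A) := by
  set δ := ε / (d + 1)
  have hδ : 0 < δ := by positivity
  refine ⟨(a / δ + 1) ^ d, by positivity, fun A hA => ?_⟩
  have hlin : a * A + 1 ≤ (a / δ + 1) * Real.exp (δ * A) :=
    calc a * A + 1 = a / δ * (δ * A) + 1 := by field_simp
      _ ≤ a / δ * Real.exp (δ * A) + Real.exp (δ * A) := by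
          gcongr
          · linarith [Real.add_one_le_exp (δ * A)]
          · exact Real.one_le_exp (by positivity)
      _ = (a / δ + 1) * Real.exp (δ * A) := by ring
  calc (a * A + 1) ^ d ≤ ((a / δ + 1) * Real.exp (δ * A)) ^ d := by gcongr
    _ = (a / δ + 1) ^ d * Real.exp (d * δ * A) := by
        rw [mul_pow, ← Real.exp_nat_mul, mul_assoc]
    _ ≤ (a / δ + 1) ^ d * Real.exp (ε * A) := by
        gcongr
        calc (d : ℝ) * δ = ε * (d / (d + 1)) := by ring
          _ ≤ ε := mul_le_of_le_one_right hε.le (div_le_one_of_le₀ (by linarith) (by positivity))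

namespace NumberField.Units

open scoped Classical

variable {F : Type*} [Field F] [NumberField F]

theorem logEmbedding_eq_sum_smul {u ζ : (𝓞 F)ˣ} {f : Fin (rank F) → ℤ} (hζ : ζ ∈ torsion F)
    (hu : u = ζ * ∏ i, fundSystem F i ^ f i) :
    logEmbedding F (Additive.ofMul u) =
      ∑ i, (f i : ℝ) • (basisUnitLattice F).ofZLatticeBasis ℝ (unitLattice F) i := by
  simp only [hu, ofMul_mul, map_add, logEmbedding_eq_zero_iff.mpr hζ, zero_add, ofMul_prod,
    map_sum, ofMul_zpow, map_zsmul, logEmbedding_fundSystem, Module.Basis.ofZLatticeBasis_apply,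
    Int.cast_smul_eq_zsmul]

variable (F) in
theorem exists_embedding_norm_logEmbedding_le :
    ∃ K, 0 ≤ K ∧ ∀ A, Nonempty ({u : (𝓞 F)ˣ // ‖logEmbedding F (Additive.ofMul u)‖ ≤ A} ↪
      torsion F × {f : Fin (rank F) → ℤ // ∀ i, |(f i : ℝ)| ≤ K * A}) := by
  let b := (basisUnitLattice F).ofZLatticeBasis ℝ (unitLattice F)
  obtain ⟨K, hK, hb⟩ := b.exists_norm_equivFun_le_mul_norm
  refine ⟨K, hK, fun A => ?_⟩
  choose c hc using fun u : (𝓞 F)ˣ => (exist_unique_eq_mul_prod F u).exists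
  have hc_bound (u : {u : (𝓞 F)ˣ // ‖logEmbedding F (Additive.ofMul u)‖ ≤ A})
      (i : Fin (rank F)) :
      |((c u).2 i : ℝ)| ≤ K * A := by
    have hcoord : b.equivFun (logEmbedding F (Additive.ofMul u)) = fun i => ((c u).2 i : ℝ) := by
      rw [logEmbedding_eq_sum_smul (c u).1.2 (hc u), ← b.equivFun_symm_apply,
        LinearEquiv.apply_symm_apply]
    have := hb (logEmbedding F (Additive.ofMul u)) i
    rw [hcoord, Real.norm_eq_abs] at this
    exact this.trans (mul_le_mul_of_nonneg_left u.2 hK)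
  refine ⟨⟨fun u => ((c u).1, ⟨(c u).2, hc_bound u⟩), fun u u' h => ?_⟩⟩
  simp only [Prod.mk.injEq, Subtype.mk.injEq] at h
  have : c u = c u' := Prod.ext h.1 h.2
  exact Subtype.ext ((hc u).trans (this ▸ (hc u').symm))

instance (A : ℝ) : Finite {u : (𝓞 F)ˣ // ‖logEmbedding F (Additive.ofMul u)‖ ≤ A} := by
  obtain ⟨K, -, hemb⟩ := exists_embedding_norm_logEmbedding_le F
  exact Finite.of_injective _ (hemb A).some.injective

variable (F) in
theorem exists_card_norm_logEmbedding_le_le_mul_exp {ε : ℝ} (hε : 0 < ε) :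
    ∃ C, 0 < C ∧ ∀ A, 0 ≤ A →
      (Nat.card {u : (𝓞 F)ˣ // ‖logEmbedding F (Additive.ofMul u)‖ ≤ A} : ℝ) ≤
        C * Real.exp (ε * A) := by
  obtain ⟨K, hK, hemb⟩ := exists_embedding_norm_logEmbedding_le F
  obtain ⟨C, hC, hpow⟩ :=
    exists_mul_add_one_pow_le_mul_exp (by positivity : 0 ≤ 2 * K) (rank F) hε
  refine ⟨torsionOrder F * C, by have := torsionOrder_pos F; positivity, fun A hA => ?_⟩
  calc (Nat.card {u : (𝓞 F)ˣ // ‖logEmbedding F (Additive.ofMul u)‖ ≤ A} : ℝ)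
      ≤ Nat.card (torsion F × {f : Fin (rank F) → ℤ // ∀ i, |(f i : ℝ)| ≤ K * A}) := by
        exact_mod_cast Nat.card_le_card_of_injective _ (hemb A).some.injective
    _ ≤ torsionOrder F * (2 * K * A + 1) ^ rank F := by
        rw [Nat.card_prod, Nat.cast_mul, torsionOrder, mul_assoc 2]
        gcongr
        simpa using card_int_vectors_abs_le (ι := Fin (rank F)) (by positivity : 0 ≤ K * A)
    _ ≤ torsionOrder F * C * Real.exp (ε * A) := by
        rw [mul_assoc (torsionOrder F : ℝ)]
        exact mul_le_mul_of_nonneg_left (hpow A hA) (Nat.cast_nonneg _)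

theorem norm_logEmbedding_le_log_prod {u : (𝓞 F)ˣ} {c : InfinitePlace F → ℝ}
    (hc : ∀ w, 1 ≤ c w) (hu : ∀ w, w (u : F) ≤ c w) :
    ‖logEmbedding F (Additive.ofMul u)‖ ≤ Real.log (∏ w, c w ^ w.mult) := by
  have hlog_nonneg (w : InfinitePlace F) : 0 ≤ (w.mult : ℝ) * Real.log (c w) :=
    mul_nonneg (Nat.cast_nonneg _) (Real.log_nonneg (hc w))
  rw [Real.log_prod fun w _ => (pow_pos (zero_lt_one.trans_le (hc w)) _).ne']
  simp only [Real.log_pow]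
  refine (pi_norm_le_iff_of_nonneg (Finset.sum_nonneg fun w _ => hlog_nonneg w)).mpr fun w => ?_
  rw [logEmbedding_component, Real.norm_eq_abs]
  refine Finset.abs_le_sum_of_sum_eq_zero (sum_mult_mul_log u) (fun w _ => ?_)
    (fun w _ => hlog_nonneg w) (Finset.mem_univ w.1)
  exact mul_le_mul_of_nonneg_left (Real.log_le_log (pos_at_place u w) (hu w)) (Nat.cast_nonneg _)

end NumberField.Units

theorem IsDedekindDomain.exists_unit_mul_eq_of_valuation_eq {R K : Type*} [CommRing R]
    [IsDedekindDomain R] [Field K] [Algebra R K] [IsFractionRing R K] {x y : K} (hx : x ≠ 0)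
    (hy : y ≠ 0) (h : ∀ v : HeightOneSpectrum R, v.valuation K x = v.valuation K y) :
    ∃ u : Rˣ, algebraMap R K u * y = x := by
  have hquot {a b : K} (hb : b ≠ 0)
      (hab : ∀ v : HeightOneSpectrum R, v.valuation K a = v.valuation K b) :
      ∃ r : R, algebraMap R K r = a / b :=
    HeightOneSpectrum.mem_integers_of_valuation_le_one K _ fun v => by
      rw [map_div₀, hab v, div_self ((Valuation.ne_zero_iff _).mpr hb)]
  obtain ⟨r, hr⟩ := hquot hy h
  obtain ⟨s, hs⟩ := hquot hx fun v => (h v).symm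
  have hrs : r * s = 1 := IsFractionRing.injective R K (by
    rw [map_mul, hr, hs, map_one, div_mul_div_cancel₀ hy, div_self hx])
  exact ⟨⟨r, s, hrs, mul_comm s r ▸ hrs⟩, by simp [hr, hy]⟩

namespace NumberField

variable {F : Type*} [Field F] [NumberField F]

theorem FinitePlace.mk_apply_of_valuation_eq {v : HeightOneSpectrum (𝓞 F)} {x : F} {n : ℤ}
    (hx : v.valuation F x = ((Multiplicative.ofAdd n : Multiplicative ℤ) :
      WithZero (Multiplicative ℤ))) :
    FinitePlace.mk v x = (Ideal.absNorm v.asIdeal : ℝ) ^ n := by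
  rw [FinitePlace.mk_apply, FinitePlace.norm_embedding', hx,
    WithZeroMulInt.toNNReal_neg_apply _ WithZero.coe_ne_zero]
  simp

theorem FinitePlace.finprod_apply_eq_prod {x : F} {S : Finset (HeightOneSpectrum (𝓞 F))}
    {e : HeightOneSpectrum (𝓞 F) → ℤ} (he : ∀ v ∉ S, e v = 0)
    (hx : ∀ v : HeightOneSpectrum (𝓞 F), v.valuation F x =
      ((Multiplicative.ofAdd (-(e v)) : Multiplicative ℤ) : WithZero (Multiplicative ℤ))) :
    ∏ᶠ w : FinitePlace F, w x = ∏ v ∈ S, (Ideal.absNorm v.asIdeal : ℝ) ^ (-(e v)) := by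
  rw [← finprod_comp_equiv FinitePlace.equivHeightOneSpectrum.symm]
  change ∏ᶠ v, FinitePlace.mk v x = _
  rw [finprod_congr fun v => FinitePlace.mk_apply_of_valuation_eq (hx v)]
  refine finprod_eq_prod_of_mulSupport_subset _ fun v hv => ?_
  by_contra hvS
  exact hv (by simp only [he v hvS, neg_zero, zpow_zero])

end NumberField

section IdeleBox

variable {F : Type*} [Field F] [NumberField F]

/-- For the idele `t` with `|t_w|_w = y w ^ mult w` at the infinite places and
`|t_v|_v = N(v) ^ (-e v)` at the finite ones, `ideleBox y e` is the set of `x ∈ F^×` with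
`|x|_v ≤ |t_v|_v` at every `v ∣ ∞` and `|x|_v = |t_v|_v` at every `v ∤ ∞`, and
`ideleModule y S e = |t|_𝔸` when `e` vanishes off `S`. -/
def ideleBox (y : InfinitePlace F → ℝ) (e : HeightOneSpectrum (𝓞 F) → ℤ) : Set F :=
  {x | x ≠ 0 ∧ (∀ w : InfinitePlace F, (w x) ^ w.mult ≤ (y w) ^ w.mult) ∧
    ∀ v : HeightOneSpectrum (𝓞 F),
      v.valuation F x = ((Multiplicative.ofAdd (-(e v)) : Multiplicative ℤ) :
        WithZero (Multiplicative ℤ))}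

noncomputable def ideleModule (y : InfinitePlace F → ℝ) (S : Finset (HeightOneSpectrum (𝓞 F)))
    (e : HeightOneSpectrum (𝓞 F) → ℤ) : ℝ :=
  (∏ w : InfinitePlace F, (y w) ^ w.mult) * ∏ v ∈ S, (Ideal.absNorm v.asIdeal : ℝ) ^ (-(e v))

variable {y : InfinitePlace F → ℝ} {e : HeightOneSpectrum (𝓞 F) → ℤ} {x : F}

theorem le_of_mem_ideleBox (hy : ∀ w, 0 < y w) (hx : x ∈ ideleBox y e) (w : InfinitePlace F) :
    w x ≤ y w :=
  (pow_le_pow_iff_left₀ (apply_nonneg w x) (hy w).le InfinitePlace.mult_ne_zero).mp (hx.2.1 w)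

theorem one_le_div_of_mem_ideleBox (hy : ∀ w, 0 < y w) (hx : x ∈ ideleBox y e)
    (w : InfinitePlace F) : 1 ≤ y w / w x :=
  (one_le_div (InfinitePlace.pos_iff.mpr hx.1)).mpr (le_of_mem_ideleBox hy hx w)

theorem ideleModule_nonneg (S : Finset (HeightOneSpectrum (𝓞 F))) (hy : ∀ w, 0 < y w) :
    0 ≤ ideleModule y S e :=
  mul_nonneg (Finset.prod_nonneg fun w _ => pow_nonneg (hy w).le _)
    (Finset.prod_nonneg fun _ _ => zpow_nonneg (Nat.cast_nonneg _) _)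

theorem ideleModule_eq_prod_div {S : Finset (HeightOneSpectrum (𝓞 F))} (he : ∀ v ∉ S, e v = 0)
    (hx : x ∈ ideleBox y e) : ideleModule y S e = ∏ w, (y w / w x) ^ w.mult := by
  have hproduct := prod_abs_eq_one hx.1
  rw [FinitePlace.finprod_apply_eq_prod he hx.2.2] at hproduct
  simp only [ideleModule, div_eq_mul_inv, mul_pow, Finset.prod_mul_distrib, inv_pow,
    Finset.prod_inv_distrib, eq_inv_of_mul_eq_one_left hproduct, inv_inv]

open scoped Classical in
theorem card_ideleBox_le (hy : ∀ w, 0 < y w) {x₀ : F} (hx₀ : x₀ ∈ ideleBox y e) :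
    Nat.card (ideleBox y e) ≤ Nat.card {u : (𝓞 F)ˣ //
      ‖logEmbedding F (Additive.ofMul u)‖ ≤ Real.log (∏ w, (y w / w x₀) ^ w.mult)} := by
  have hx₀_pos (w : InfinitePlace F) : 0 < w x₀ := InfinitePlace.pos_iff.mpr hx₀.1
  choose u hu using fun x : ideleBox y e =>
    exists_unit_mul_eq_of_valuation_eq x.2.1 hx₀.1 fun v => by rw [x.2.2.2 v, hx₀.2.2 v]
  have hu_bound (x : ideleBox y e) :
      ‖logEmbedding F (Additive.ofMul (u x))‖ ≤ Real.log (∏ w, (y w / w x₀) ^ w.mult) := by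
    refine norm_logEmbedding_le_log_prod (one_le_div_of_mem_ideleBox hy hx₀) fun w => ?_
    rw [le_div_iff₀ (hx₀_pos w), ← map_mul, hu x]
    exact le_of_mem_ideleBox hy x.2 w
  refine Nat.card_le_card_of_injective (fun x => ⟨u x, hu_bound x⟩) fun x x' h => ?_
  have : u x = u x' := congrArg Subtype.val h
  exact Subtype.ext ((hu x).symm.trans (this ▸ hu x'))

end IdeleBox

/-- (Adelic counting, Lemma 6(b).) With an idele `t` described as in
Lemma 6(a) — local modules `(y w)^(mult w)` at the infinite places and valuations `e v`
(supported on a finite set `S`) at the finite places, of total module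
`|t|_𝔸 = ∏_w (y w)^(mult w) · ∏_{v ∈ S} (N v)^(-e v)` — the number of `x ∈ F^×` with
`|x|_v ≤ |t_v|_v` for all `v ∣ ∞` and `|x|_v = |t_v|_v` for all `v ∤ ∞` is
`≪_{F,ε} |t|_𝔸^ε` for every `ε > 0`. -/
theorem card_field_elements_le_module_pow_eps (F : Type*) [Field F] [NumberField F] :
    ∀ ε : ℝ, 0 < ε → ∃ C : ℝ, 0 < C ∧
      ∀ (y : InfinitePlace F → ℝ), (∀ w, 0 < y w) →
      ∀ (S : Finset (HeightOneSpectrum (𝓞 F))) (e : HeightOneSpectrum (𝓞 F) → ℤ),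
        (∀ v ∉ S, e v = 0) →
        (Nat.card {x : F // x ≠ 0 ∧
            (∀ w : InfinitePlace F, (w x) ^ w.mult ≤ (y w) ^ w.mult) ∧
            (∀ v : HeightOneSpectrum (𝓞 F),
              v.valuation F x = ((Multiplicative.ofAdd (-(e v)) : Multiplicative ℤ) :
                WithZero (Multiplicative ℤ)))} : ℝ) ≤
          C * ((∏ w : InfinitePlace F, (y w) ^ w.mult) *
            ∏ v ∈ S, (Ideal.absNorm v.asIdeal : ℝ) ^ (-(e v))) ^ ε := by
  intro ε hε
  obtain ⟨C, hC, hcount⟩ := exists_card_norm_logEmbedding_le_le_mul_exp F hε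
  refine ⟨C, hC, fun y hy S e he => ?_⟩
  show (Nat.card (ideleBox y e) : ℝ) ≤ C * ideleModule y S e ^ ε
  obtain hempty | ⟨x₀, hx₀⟩ := (ideleBox y e).eq_empty_or_nonempty
  · rw [hempty, Nat.card_of_isEmpty, Nat.cast_zero]
    exact mul_nonneg hC.le (Real.rpow_nonneg (ideleModule_nonneg S hy) ε)
  have hone : 1 ≤ ∏ w, (y w / w x₀) ^ w.mult :=
    Finset.one_le_prod fun w _ => one_le_pow₀ (one_le_div_of_mem_ideleBox hy hx₀ w)
  calc (Nat.card (ideleBox y e) : ℝ)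
      ≤ C * Real.exp (ε * Real.log (∏ w, (y w / w x₀) ^ w.mult)) :=
        (Nat.cast_le.mpr (card_ideleBox_le hy hx₀)).trans (hcount _ (Real.log_nonneg hone))
    _ = C * ideleModule y S e ^ ε := by
        rw [ideleModule_eq_prod_div he hx₀, Real.rpow_def_of_pos (by linarith), mul_comm ε]
end

section
/- Let F be a number field, y ∈ F_∞^× an element of the product of archimedean completions, and m a nonzero fractional ideal of F. Then the number of x ∈ F^× with |x|_v ≤ |y_v|_v for all archimedean places v and x·O_F ⊆ m is at most C·|y|_∞/N(m), where |y|_∞ = ∏_{v|∞}|y_v|_v, N(m) is the absolute norm of m, and C depends only on F. -/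
/-!
If `x ≠ x'` lie in the box and in `m` and `x - x' = q w` with `w ∈ m`, then
`q ^ n N(m) ≤ q ^ n |N(w)| = |N(x - x')| ≤ 2 ^ n |y|_∞`. So as soon as
`2 ^ n |y|_∞ < q ^ n N(m)` the box injects into `m / q m`, which has `q ^ n` elements.
A nonempty box forces `N(m) ≤ |y|_∞`, and then `q` can be taken with `q ^ n ≤ 4 ^ n |y|_∞ / N(m)`.
-/

open NumberField nonZeroDivisors Module

theorem FractionalIdeal.absNorm_le_absNorm_of_le {R K : Type*} [CommRing R] [IsDedekindDomain R]
    [Module.Free ℤ R] [Module.Finite ℤ R] [Field K] [Algebra R K] [IsFractionRing R K]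
    {I J : FractionalIdeal R⁰ K} (hI : I ≠ 0) (hJ : J ≠ 0) (hIJ : I ≤ J) :
    absNorm J ≤ absNorm I := by
  have hle : I * J⁻¹ ≤ 1 := by
    simpa [mul_inv_cancel₀ hJ] using mul_le_mul_left hIJ J⁻¹
  obtain ⟨A, hA⟩ := le_one_iff_exists_coeIdeal.mp hle
  have hIA : I = A * J := by rw [hA, mul_assoc, inv_mul_cancel₀ hJ, mul_one]
  have hA0 : A ≠ ⊥ := by
    rintro rfl
    exact hI (by simpa using hIA)
  have hAnorm : (1 : ℚ) ≤ Ideal.absNorm A := by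
    exact_mod_cast Nat.one_le_iff_ne_zero.mpr (Ideal.absNorm_eq_zero_iff.not.mpr hA0)
  rw [hIA, map_mul, coeIdeal_absNorm]
  exact le_mul_of_one_le_left (absNorm_nonneg J) hAnorm

theorem Module.Basis.natCard_le_pow_of_sub_eq_smul {α M ι : Type*} [AddCommGroup M] [Fintype ι]
    (b : Basis ι ℤ M) (q : ℕ) [NeZero q] (g : α → M)
    (hg : ∀ a a' w, g a - g a' = q • w → a = a') :
    Nat.card α ≤ q ^ Fintype.card ι := by
  let reduce : α → ι → ZMod q := fun a i => (b.equivFun (g a) i : ZMod q)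
  have hreduce : Function.Injective reduce := by
    intro a a' h
    have hdvd : ∀ i, (q : ℤ) ∣ b.equivFun (g a - g a') i := fun i => by
      simpa using ((ZMod.intCast_eq_intCast_iff_dvd_sub _ _ q).mp (congrFun h i).symm)
    refine hg a a' (b.equivFun.symm fun i => b.equivFun (g a - g a') i / q) ?_
    rw [← b.equivFun.injective.eq_iff, map_nsmul, LinearEquiv.apply_symm_apply]
    ext i
    exact (Int.mul_ediv_cancel' (hdvd i)).symm
  calc Nat.card α ≤ Nat.card (ι → ZMod q) := Nat.card_le_card_of_injective reduce hreduce
    _ = q ^ Fintype.card ι := by rw [Nat.card_fun, Nat.card_zmod, Nat.card_eq_fintype_card]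

theorem exists_nat_lt_pow_le_two_pow_mul {A : ℝ} (hA : 1 ≤ A) {n : ℕ} (hn : n ≠ 0) :
    ∃ q : ℕ, q ≠ 0 ∧ A < q ^ n ∧ (q : ℝ) ^ n ≤ 2 ^ n * A := by
  set t := A ^ (n : ℝ)⁻¹
  have ht : t ^ n = A := Real.rpow_inv_natCast_pow (by linarith) hn
  have ht1 : 1 ≤ t := Real.one_le_rpow hA (by positivity)
  refine ⟨⌊t⌋₊ + 1, Nat.succ_ne_zero _, ?_, ?_⟩
  · rw [← ht]
    exact pow_lt_pow_left₀ (by exact_mod_cast Nat.lt_floor_add_one t) (by linarith) hn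
  · calc ((⌊t⌋₊ + 1 : ℕ) : ℝ) ^ n ≤ (2 * t) ^ n := by
          gcongr
          push_cast
          linarith [Nat.floor_le (by linarith : 0 ≤ t)]
      _ = 2 ^ n * A := by rw [mul_pow, ht]

namespace NumberField

variable {F : Type*} [Field F] [NumberField F]

theorem abs_norm_le_prod_of_forall_pow_mult_le {x : F} {y : InfinitePlace F → ℝ}
    (hx : ∀ w : InfinitePlace F, w x ^ w.mult ≤ y w ^ w.mult) :
    ((|Algebra.norm ℚ x| : ℚ) : ℝ) ≤ ∏ w : InfinitePlace F, y w ^ w.mult := by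
  rw [← InfinitePlace.prod_eq_abs_norm]
  exact Finset.prod_le_prod (fun w _ => by positivity) fun w _ => hx w

theorem abs_norm_sub_le_two_pow_mul_prod {x x' : F} {y : InfinitePlace F → ℝ}
    (hx : ∀ w : InfinitePlace F, w x ≤ y w) (hx' : ∀ w : InfinitePlace F, w x' ≤ y w) :
    ((|Algebra.norm ℚ (x - x')| : ℚ) : ℝ) ≤
      2 ^ finrank ℚ F * ∏ w : InfinitePlace F, y w ^ w.mult := by
  have hsub : ∀ w : InfinitePlace F, w (x - x') ≤ 2 * y w := fun w =>
    calc w (x - x') ≤ w x + w x' := w.1.sub_le_add x x'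
      _ ≤ 2 * y w := by linarith [hx w, hx' w]
  calc ((|Algebra.norm ℚ (x - x')| : ℚ) : ℝ)
        ≤ ∏ w : InfinitePlace F, (2 * y w) ^ w.mult :=
        abs_norm_le_prod_of_forall_pow_mult_le fun w =>
          pow_le_pow_left₀ (apply_nonneg w _) (hsub w) _
    _ = 2 ^ finrank ℚ F * ∏ w : InfinitePlace F, y w ^ w.mult := by
        rw [Finset.prod_congr rfl fun w _ => mul_pow 2 (y w) w.mult, Finset.prod_mul_distrib,
          Finset.prod_pow_eq_pow_sum, InfinitePlace.sum_mult_eq]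

theorem absNorm_le_abs_norm_of_mem {m : FractionalIdeal (𝓞 F)⁰ F} (hm : m ≠ 0) {x : F}
    (hx : x ≠ 0) (hxm : x ∈ m) : FractionalIdeal.absNorm m ≤ |Algebra.norm ℚ x| := by
  rw [← FractionalIdeal.absNorm_span_singleton (𝓞 F)]
  exact FractionalIdeal.absNorm_le_absNorm_of_le
    (FractionalIdeal.spanSingleton_eq_zero_iff.not.mpr hx) hm
    (FractionalIdeal.spanSingleton_le_iff_mem.mpr hxm)

theorem natCard_le_pow_of_two_pow_mul_lt {y : InfinitePlace F → ℝ} (hy : ∀ w, 0 ≤ y w)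
    {m : FractionalIdeal (𝓞 F)⁰ F} (hm : m ≠ 0) (q : ℕ) [NeZero q]
    (hq : 2 ^ finrank ℚ F * ∏ w : InfinitePlace F, y w ^ w.mult <
      q ^ finrank ℚ F * (FractionalIdeal.absNorm m : ℝ)) :
    Nat.card {x : F // x ≠ 0 ∧
        (∀ w : InfinitePlace F, (w x) ^ w.mult ≤ (y w) ^ w.mult) ∧
        FractionalIdeal.spanSingleton (𝓞 F)⁰ x ≤ m} ≤ q ^ finrank ℚ F := by
  have hcard : Fintype.card (Free.ChooseBasisIndex ℤ m) = finrank ℚ F := by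
    rw [← finrank_eq_card_chooseBasisIndex, ← RingOfIntegers.rank]
    exact fractionalIdeal_rank F (Units.mk0 m hm)
  have hbox {x : F} (hx : ∀ w : InfinitePlace F, (w x) ^ w.mult ≤ (y w) ^ w.mult)
      (w : InfinitePlace F) : w x ≤ y w :=
    (pow_le_pow_iff_left₀ (apply_nonneg w x) (hy w) w.mult_ne_zero).mp (hx w)
  rw [← hcard]
  refine (fractionalIdealBasis F m).natCard_le_pow_of_sub_eq_smul q
    (fun x => ⟨x.1, FractionalIdeal.spanSingleton_le_iff_mem.mp x.2.2.2⟩) ?_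
  rintro ⟨x, _, hxy, _⟩ ⟨x', _, hx'y, _⟩ ⟨w, hwm⟩ hsub
  have hdiff : x - x' = algebraMap ℚ F q * w := by
    simpa [nsmul_eq_mul] using congrArg Subtype.val hsub
  by_contra hne
  have hw : w ≠ 0 := by
    rintro rfl
    exact hne (Subtype.ext (sub_eq_zero.mp (by simpa using hdiff)))
  have hnorm : |Algebra.norm ℚ (x - x')| = q ^ finrank ℚ F * |Algebra.norm ℚ w| := by
    rw [hdiff, map_mul, Algebra.norm_algebraMap, abs_mul, abs_pow, Nat.abs_cast]
  have hlower :
      (q ^ finrank ℚ F * FractionalIdeal.absNorm m : ℚ) ≤ |Algebra.norm ℚ (x - x')| := by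
    rw [hnorm]
    gcongr
    exact absNorm_le_abs_norm_of_mem hm hw hwm
  have hupper := abs_norm_sub_le_two_pow_mul_prod (hbox hxy) (hbox hx'y)
  have hlower' := Rat.cast_le (K := ℝ) |>.mpr hlower
  push_cast at hlower' hupper
  linarith

end NumberField

/-- (Corollary 1(a).) For a number field `F`, an archimedean bound
`y` (with `|y|_∞ = ∏_w (y w)^(mult w)`) and a nonzero fractional ideal `m`, the number of
`x ∈ F^×` with `|x|_w ≤ |y_w|_w` at all infinite places `w` and `x·𝓞_F ⊆ m` is at most
`C · |y|_∞ / N(m)` with `C` depending only on `F`. -/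
theorem card_elements_in_fractional_ideal_le (F : Type*) [Field F] [NumberField F] :
    ∃ C : ℝ, 0 < C ∧
      ∀ (y : InfinitePlace F → ℝ), (∀ w, 0 < y w) →
      ∀ m : FractionalIdeal (𝓞 F)⁰ F, m ≠ 0 →
        (Nat.card {x : F // x ≠ 0 ∧
            (∀ w : InfinitePlace F, (w x) ^ w.mult ≤ (y w) ^ w.mult) ∧
            FractionalIdeal.spanSingleton (𝓞 F)⁰ x ≤ m} : ℝ) ≤
          C * (∏ w : InfinitePlace F, (y w) ^ w.mult) / (FractionalIdeal.absNorm m : ℝ) := by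
  set n := finrank ℚ F
  refine ⟨4 ^ n, by positivity, fun y hy m hm => ?_⟩
  set Y := ∏ w : InfinitePlace F, (y w) ^ w.mult
  have hY : 0 < Y := Finset.prod_pos fun w _ => pow_pos (hy w) _
  have hN : 0 < (FractionalIdeal.absNorm m : ℝ) := by
    exact_mod_cast (FractionalIdeal.absNorm_nonneg m).lt_of_ne'
      (FractionalIdeal.absNorm_eq_zero_iff.not.mpr hm)
  rcases isEmpty_or_nonempty {x : F // x ≠ 0 ∧
      (∀ w : InfinitePlace F, (w x) ^ w.mult ≤ (y w) ^ w.mult) ∧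
      FractionalIdeal.spanSingleton (𝓞 F)⁰ x ≤ m} with hS | ⟨x₀, hx₀, hx₀y, hx₀m⟩
  · rw [Nat.card_of_isEmpty, Nat.cast_zero]
    exact div_nonneg (mul_nonneg (by positivity) hY.le) hN.le
  have hNY : (FractionalIdeal.absNorm m : ℝ) ≤ Y :=
    (Rat.cast_le.mpr (absNorm_le_abs_norm_of_mem hm hx₀
      (FractionalIdeal.spanSingleton_le_iff_mem.mp hx₀m))).trans
      (abs_norm_le_prod_of_forall_pow_mult_le hx₀y)
  obtain ⟨q, hq0, hlt, hle⟩ := exists_nat_lt_pow_le_two_pow_mul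
    ((one_le_div hN).mpr (hNY.trans (le_mul_of_one_le_left hY.le (one_le_pow₀ one_le_two))))
    (show 0 < n from finrank_pos).ne'
  have : NeZero q := ⟨hq0⟩
  rw [div_lt_iff₀ hN] at hlt
  calc _ ≤ ((q ^ n : ℕ) : ℝ) :=
        Nat.cast_le.mpr (natCard_le_pow_of_two_pow_mul_lt (fun w => (hy w).le) hm q hlt)
    _ ≤ 2 ^ n * (2 ^ n * Y / FractionalIdeal.absNorm m) := by exact_mod_cast hle
    _ = 4 ^ n * Y / FractionalIdeal.absNorm m := by
        rw [show (4 : ℝ) = 2 * 2 by norm_num, mul_pow]; ring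
end

section
/- Let F be a number field, y ∈ F_∞^×, and m a nonzero fractional ideal of F. For every ε > 0, the number of x ∈ F^× with |x|_v ≤ |y_v|_v for all archimedean v and x·O_F = m (exact equality of ideals) is at most C_ε·(|y|_∞/N(m))^ε, with C_ε depending only on F and ε. -/
/-!
Two generators of `m` differ by a unit, so once a generator `x₀` is fixed, the count is at most
the number of units `u` with `w u ≤ B w := y w / w x₀` at every infinite place, where
`∏ w, B w ^ mult w = |y|_∞ / N(m) =: T ≥ 1`. Since `∏ w, w u ^ mult w = 1`, each
`mult w * log (w u)` lies in `[log (B w ^ mult w) - log T, log (B w ^ mult w)]`, so the logarithmic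
embedding of `u` lies in a sup-norm ball of radius `log T / 2` determined by `B`.
Such a ball contains `O((1 + log T) ^ r)` lattice points (their integer coordinates in a basis are
confined to intervals of length `O(log T)`), each fibre of the logarithmic embedding is a coset of
the finite torsion subgroup, and `(1 + log T) ^ r = O_ε(T ^ ε)`.
-/

open NumberField nonZeroDivisors

open Finset Module NumberField.InfinitePlace NumberField.Units
  NumberField.Units.dirichletUnitTheorem

theorem Int.card_Icc_ceil_floor_le {a b : ℝ} (hab : a ≤ b) :
    (#(Icc ⌈a⌉ ⌊b⌋) : ℝ) ≤ b - a + 1 := by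
  have hcard : ((#(Icc ⌈a⌉ ⌊b⌋) : ℤ) : ℝ) = max ((⌊b⌋ + 1 - ⌈a⌉ : ℤ) : ℝ) 0 := by
    rw [Int.card_Icc, Int.toNat_eq_max]
    push_cast
    rfl
  rw [← Int.cast_natCast, hcard]
  refine max_le ?_ (by linarith)
  push_cast
  linarith [Int.floor_le b, Int.le_ceil a]

theorem Module.Basis.abs_repr_le {E ι : Type*} [NormedAddCommGroup E] [NormedSpace ℝ E]
    [Fintype ι] (b : Basis ι ℝ E) (x : E) (i : ι) :
    |b.repr x i| ≤ ‖(b.equivFunL : E →L[ℝ] ι → ℝ)‖ * ‖x‖ :=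
  calc |b.repr x i| = ‖b.equivFunL x i‖ := rfl
    _ ≤ ‖b.equivFunL x‖ := norm_le_pi_norm _ i
    _ ≤ _ := (b.equivFunL : E →L[ℝ] ι → ℝ).le_opNorm x

theorem ZLattice.exists_natCard_inter_closedBall_le {E ι : Type*} [NormedAddCommGroup E]
    [NormedSpace ℝ E] [FiniteDimensional ℝ E] [Fintype ι] (L : Submodule ℤ E)
    [DiscreteTopology L] [IsZLattice ℝ L] (b : Basis ι ℤ L) :
    ∃ c : ℝ, 0 < c ∧ ∀ (v : E) (R : ℝ), 0 ≤ R →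
      Finite ↥((L : Set E) ∩ Metric.closedBall v R) ∧
      (Nat.card ↥((L : Set E) ∩ Metric.closedBall v R) : ℝ) ≤ c * (1 + R) ^ Fintype.card ι := by
  set bR := b.ofZLatticeBasis ℝ L
  set c := ‖(bR.equivFunL : E →L[ℝ] ι → ℝ)‖
  have hc : 0 ≤ c := norm_nonneg _
  refine ⟨(2 * c + 1) ^ Fintype.card ι, by positivity, fun v R hR => ?_⟩
  set P := (L : Set E) ∩ Metric.closedBall v R
  let box (i : ι) : Finset ℤ := Icc ⌈bR.repr v i - c * R⌉ ⌊bR.repr v i + c * R⌋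
  have mem_box (x : P) (i : ι) : b.repr ⟨x, x.2.1⟩ i ∈ box i := by
    have hdist : |bR.repr x i - bR.repr v i| ≤ c * R := by
      rw [← Finsupp.sub_apply, ← map_sub]
      exact (bR.abs_repr_le _ i).trans
        (mul_le_mul_of_nonneg_left (mem_closedBall_iff_norm.mp x.2.2) (norm_nonneg _))
    have hx : bR.repr x i = b.repr ⟨x, x.2.1⟩ i := b.ofZLatticeBasis_repr_apply ℝ L ⟨x, x.2.1⟩ i
    rw [hx] at hdist
    rw [mem_Icc, Int.ceil_le, Int.le_floor]
    constructor <;> linarith [abs_le.mp hdist]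
  let coords (x : P) (i : ι) : box i := ⟨b.repr ⟨x, x.2.1⟩ i, mem_box x i⟩
  have coords_injective : Function.Injective coords := fun x x' h => by
    have : b.repr ⟨x, x.2.1⟩ = b.repr ⟨x', x'.2.1⟩ :=
      Finsupp.ext fun i => congrArg Subtype.val (congrFun h i)
    have hL := b.repr.injective this
    exact Subtype.ext (congrArg (Subtype.val : L → E) hL)
  refine ⟨Finite.of_injective coords coords_injective, ?_⟩
  calc (Nat.card P : ℝ) ≤ Nat.card (∀ i, box i) := by
        exact_mod_cast Nat.card_le_card_of_injective coords coords_injective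
    _ = ∏ i, (#(box i) : ℝ) := by simp [Nat.card_pi]
    _ ≤ ∏ _i : ι, (2 * c * R + 1) := prod_le_prod (fun _ _ => by positivity)
        fun i _ => (Int.card_Icc_ceil_floor_le (by nlinarith)).trans_eq (by ring)
    _ ≤ _ := by
        rw [prod_const, card_univ, ← mul_pow]
        gcongr
        nlinarith

theorem AddMonoidHom.finite_and_natCard_le_of_mapsTo {G H : Type*} [AddGroup G] [AddGroup H]
    (f : G →+ H) [Finite f.ker] {S : Set G} {T : Set H} [Finite T] (hST : Set.MapsTo f S T) :
    Finite S ∧ Nat.card S ≤ Nat.card f.ker * Nat.card T := by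
  have hsection (x : G) : f (Function.invFun f (f x)) = f x := Function.invFun_eq ⟨x, rfl⟩
  let φ (x : S) : f.ker × T :=
    (⟨x - Function.invFun f (f x), by simp [hsection]⟩, ⟨f x, hST x.2⟩)
  have hφ : Function.Injective φ := fun x x' h => by
    simp only [φ, Prod.mk.injEq, Subtype.mk.injEq] at h
    rw [h.2] at h
    exact Subtype.ext (sub_left_inj.mp h.1)
  exact ⟨Finite.of_injective φ hφ,
    (Nat.card_le_card_of_injective φ hφ).trans_eq (Nat.card_prod _ _)⟩

theorem sub_sum_le_of_le_of_sum_eq_zero {ι M : Type*} [Fintype ι] [AddCommGroup M]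
    [PartialOrder M] [IsOrderedAddMonoid M] {a b : ι → M} (hab : ∀ i, a i ≤ b i)
    (ha : ∑ i, a i = 0) (i : ι) : b i - ∑ j, b j ≤ a i := by
  classical
  have := sum_le_sum (s := univ.erase i) fun j _ => hab j
  rw [sum_erase_eq_sub (mem_univ i), sum_erase_eq_sub (mem_univ i), ha, zero_sub,
    neg_le_sub_iff_le_add] at this
  rwa [sub_le_iff_le_add']

theorem Real.exists_one_add_log_pow_le_rpow (r : ℕ) {ε : ℝ} (hε : 0 < ε) :
    ∃ C : ℝ, 0 < C ∧ ∀ T : ℝ, 1 ≤ T → (1 + Real.log T) ^ r ≤ C * T ^ ε := by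
  set δ := ε / (r + 1)
  have hδ : 0 < δ := by positivity
  refine ⟨(1 + δ⁻¹) ^ r, by positivity, fun T hT => ?_⟩
  have hlog : 1 + Real.log T ≤ (1 + δ⁻¹) * T ^ δ := by
    have hle := Real.log_le_rpow_div (zero_le_one.trans hT) hδ
    have hone := Real.one_le_rpow hT hδ.le
    rw [div_eq_inv_mul] at hle
    nlinarith
  have hδr : δ * r ≤ ε := by
    rw [div_mul_eq_mul_div, div_le_iff₀ (by positivity)]
    nlinarith
  calc (1 + Real.log T) ^ r ≤ ((1 + δ⁻¹) * T ^ δ) ^ r :=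
        pow_le_pow_left₀ (by linarith [Real.log_nonneg hT]) hlog r
    _ = (1 + δ⁻¹) ^ r * T ^ (δ * r) := by
        rw [mul_pow, ← Real.rpow_natCast (T ^ δ), ← Real.rpow_mul (by linarith)]
    _ ≤ (1 + δ⁻¹) ^ r * T ^ ε := by gcongr

section Units

variable {F : Type*} [Field F] [NumberField F]

variable (F) in
def unitsInBox (B : InfinitePlace F → ℝ) : Set (𝓞 F)ˣ := {u | ∀ w, w (u : F) ≤ B w}

open scoped Classical in
theorem logEmbedding_mem_closedBall {B : InfinitePlace F → ℝ} (hB : ∀ w, 0 < B w)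
    {u : (𝓞 F)ˣ} (hu : ∀ w, w (u : F) ≤ B w) :
    logEmbedding F (Additive.ofMul u) ∈ Metric.closedBall
      (fun w => Real.log (B w.1 ^ mult w.1) - Real.log (∏ w, B w ^ mult w) / 2)
      (Real.log (∏ w, B w ^ mult w) / 2) := by
  have hu_pos (w : InfinitePlace F) : 0 < w (u : F) := pos_iff.mpr (coe_ne_zero u)
  have hle (w : InfinitePlace F) : Real.log (w (u : F) ^ mult w) ≤ Real.log (B w ^ mult w) :=
    Real.log_le_log (pow_pos (hu_pos w) _) (pow_le_pow_left₀ (apply_nonneg _ _) (hu w) _)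
  have hsum : ∑ w, Real.log (w (u : F) ^ mult w) = 0 := by
    rw [← Real.log_prod fun w _ => (pow_pos (hu_pos w) _).ne', prod_eq_abs_norm, Units.norm,
      Rat.cast_one, Real.log_one]
  have hlower := sub_sum_le_of_le_of_sum_eq_zero hle hsum
  have hS : 0 ≤ ∑ w, Real.log (B w ^ mult w) := hsum ▸ sum_le_sum fun w _ => hle w
  rw [Metric.mem_closedBall, Real.log_prod fun w _ => (pow_pos (hB w) _).ne',
    dist_pi_le_iff (by positivity)]
  intro w
  rw [logEmbedding_component, Real.dist_eq, abs_le, ← Real.log_pow]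
  constructor <;> linarith [hle w.1, hlower w.1]

variable (F) in
theorem exists_natCard_units_le_log_pow :
    ∃ (c : ℝ) (r : ℕ), 0 < c ∧ ∀ B : InfinitePlace F → ℝ, (∀ w, 0 < B w) →
      1 ≤ ∏ w, B w ^ mult w →
      Finite (unitsInBox F B) ∧
      (Nat.card (unitsInBox F B) : ℝ) ≤
        c * (1 + Real.log (∏ w, B w ^ mult w)) ^ r := by
  classical
  obtain ⟨c, hc, hlattice⟩ := ZLattice.exists_natCard_inter_closedBall_le (unitLattice F)
    (Free.chooseBasis ℤ (unitLattice F))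
  refine ⟨Nat.card (torsion F) * c, Fintype.card (Free.ChooseBasisIndex ℤ (unitLattice F)),
    mul_pos (Nat.cast_pos.mpr Nat.card_pos) hc, fun B hB hT => ?_⟩
  set S := Real.log (∏ w, B w ^ mult w)
  have hS : 0 ≤ S := Real.log_nonneg hT
  set v : logSpace F := fun w => Real.log (B w.1 ^ mult w.1) - S / 2
  let kerEquiv : (logEmbedding F).ker ≃ torsion F :=
    Equiv.subtypeEquiv Additive.toMul fun x => by
      rw [AddMonoidHom.mem_ker, ← logEmbedding_eq_zero_iff]; rfl
  have : Finite (logEmbedding F).ker := Finite.of_equiv _ kerEquiv.symm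
  have := (hlattice v (S / 2) (by positivity)).1
  have hmaps : Set.MapsTo (logEmbedding F) (Additive.toMul ⁻¹' unitsInBox F B)
      ((unitLattice F : Set (logSpace F)) ∩ Metric.closedBall v (S / 2)) :=
    fun u hu => ⟨Submodule.mem_map_of_mem trivial, logEmbedding_mem_closedBall hB hu⟩
  obtain ⟨hfin, hcard⟩ := (logEmbedding F).finite_and_natCard_le_of_mapsTo hmaps
  refine ⟨hfin, ?_⟩
  calc (Nat.card (unitsInBox F B) : ℝ)
      ≤ Nat.card (torsion F) *
          Nat.card ↥((unitLattice F : Set (logSpace F)) ∩ Metric.closedBall v (S / 2)) := by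
        rw [← Nat.card_congr kerEquiv]; exact_mod_cast hcard
    _ ≤ Nat.card (torsion F) * (c * (1 + S / 2) ^ _) := by
        gcongr; exact (hlattice v (S / 2) (by positivity)).2
    _ ≤ Nat.card (torsion F) * c * (1 + S) ^ _ := by
        rw [← mul_assoc]; gcongr; linarith

variable (F) in
theorem exists_natCard_units_le_rpow {ε : ℝ} (hε : 0 < ε) :
    ∃ C : ℝ, 0 < C ∧ ∀ B : InfinitePlace F → ℝ, (∀ w, 0 < B w) → 1 ≤ ∏ w, B w ^ mult w →
      Finite (unitsInBox F B) ∧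
      (Nat.card (unitsInBox F B) : ℝ) ≤ C * (∏ w, B w ^ mult w) ^ ε := by
  obtain ⟨c, r, hc, hunits⟩ := exists_natCard_units_le_log_pow F
  obtain ⟨C, hC, hlog⟩ := Real.exists_one_add_log_pow_le_rpow r hε
  refine ⟨c * C, by positivity, fun B hB hT => ⟨(hunits B hB hT).1, ?_⟩⟩
  calc _ ≤ c * (1 + Real.log (∏ w, B w ^ mult w)) ^ r := (hunits B hB hT).2
    _ ≤ c * (C * (∏ w, B w ^ mult w) ^ ε) := by gcongr; exact hlog _ hT
    _ = c * C * (∏ w, B w ^ mult w) ^ ε := by ring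

theorem natCard_generators_le_natCard_units (y : InfinitePlace F → ℝ) (hy : ∀ w, 0 ≤ y w)
    {x₀ : F} (hx₀ : x₀ ≠ 0) [Finite (unitsInBox F fun w => y w / w x₀)] :
    Nat.card {x : F // x ≠ 0 ∧ (∀ w : InfinitePlace F, (w x) ^ w.mult ≤ (y w) ^ w.mult) ∧
        FractionalIdeal.spanSingleton (𝓞 F)⁰ x = FractionalIdeal.spanSingleton (𝓞 F)⁰ x₀} ≤
      Nat.card (unitsInBox F fun w => y w / w x₀) := by
  choose u hu using fun (x : F)
      (hx : FractionalIdeal.spanSingleton (𝓞 F)⁰ x = FractionalIdeal.spanSingleton (𝓞 F)⁰ x₀) =>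
    FractionalIdeal.spanSingleton_eq_spanSingleton.mp hx.symm
  have hmul (x : F) (hx) (w : InfinitePlace F) : w ((u x hx : 𝓞 F) : F) * w x₀ = w x := by
    conv_rhs => rw [← hu x hx, Units.smul_def, Algebra.smul_def, map_mul]
  refine Nat.card_le_card_of_injective (fun x => ⟨u x x.2.2.2, fun w => ?_⟩)
    fun x x' h => Subtype.ext ?_
  · rw [le_div_iff₀ (pos_iff.mpr hx₀), hmul]
    exact le_of_pow_le_pow_left₀ mult_ne_zero (hy w) (x.2.2.1 w)
  · rw [← hu x x.2.2.2, ← hu x' x'.2.2.2, show u x _ = u x' _ from congrArg Subtype.val h]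

end Units

/-- (Corollary 1(b).) For a number field `F`, an archimedean bound `y`
(with `|y|_∞ = ∏_w (y w)^(mult w)`), a nonzero fractional ideal `m` and any `ε > 0`, the
number of `x ∈ F^×` with `|x|_w ≤ |y_w|_w` at all infinite places and `x·𝓞_F = m` is at
most `C_ε · (|y|_∞ / N(m))^ε` with `C_ε` depending only on `F` and `ε`. -/
theorem card_generators_in_box_le (F : Type*) [Field F] [NumberField F] :
    ∀ ε : ℝ, 0 < ε → ∃ C : ℝ, 0 < C ∧
      ∀ (y : InfinitePlace F → ℝ), (∀ w, 0 < y w) →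
      ∀ m : FractionalIdeal (𝓞 F)⁰ F, m ≠ 0 →
        (Nat.card {x : F // x ≠ 0 ∧
            (∀ w : InfinitePlace F, (w x) ^ w.mult ≤ (y w) ^ w.mult) ∧
            FractionalIdeal.spanSingleton (𝓞 F)⁰ x = m} : ℝ) ≤
          C * ((∏ w : InfinitePlace F, (y w) ^ w.mult) / (FractionalIdeal.absNorm m : ℝ)) ^ ε := by
  intro ε hε
  obtain ⟨C, hC, hunits⟩ := exists_natCard_units_le_rpow F hε
  refine ⟨C, hC, fun y hy m _ => ?_⟩
  obtain hempty | ⟨x₀, hx₀, hx₀y, rfl⟩ := isEmpty_or_nonempty {x : F // x ≠ 0 ∧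
      (∀ w : InfinitePlace F, (w x) ^ w.mult ≤ (y w) ^ w.mult) ∧
      FractionalIdeal.spanSingleton (𝓞 F)⁰ x = m}
  · rw [Nat.card_of_isEmpty, Nat.cast_zero]
    have hm := FractionalIdeal.absNorm_nonneg m
    have hy' : 0 < ∏ w, y w ^ mult w := prod_pos fun w _ => pow_pos (hy w) _
    positivity
  set B : InfinitePlace F → ℝ := fun w => y w / w x₀
  have hNorm : (FractionalIdeal.absNorm (FractionalIdeal.spanSingleton (𝓞 F)⁰ x₀) : ℝ) =
      ∏ w : InfinitePlace F, w x₀ ^ mult w := by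
    rw [FractionalIdeal.absNorm_span_singleton, prod_eq_abs_norm]
  have hB : (∏ w, y w ^ mult w) / (∏ w : InfinitePlace F, w x₀ ^ mult w) = ∏ w, B w ^ mult w := by
    simp_rw [B, div_pow, prod_div_distrib]
  have hB_one : 1 ≤ ∏ w, B w ^ mult w := by
    rw [← hB, one_le_div (prod_pos fun w _ => pow_pos (pos_iff.mpr hx₀) _)]
    exact prod_le_prod (fun w _ => by positivity) fun w _ => hx₀y w
  obtain ⟨hfin, hcard⟩ := hunits B (fun w => div_pos (hy w) (pos_iff.mpr hx₀)) hB_one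
  rw [hNorm, hB]
  exact (Nat.cast_le.mpr
    (natCard_generators_le_natCard_units y (fun w => (hy w).le) hx₀)).trans hcard
end

section
/- Let F be a number field with maximal totally real subfield K of index m = [F:K] ≥ 2 (so F is not totally real). There exists a constant c > 0 depending only on F with the following property: if ξ ∈ F generates F over K, satisfies |ξ_v| ≤ A and |Im ξ_v| ≤ A·√(δ_v) at every archimedean place v (with A ≥ 1, δ_v > 0), and ξ·O_F = k/l with k, l integral ideals, then ∏_{v complex} δ_v ≥ c · ((2A)^n · N(l)²)^{−2(m−1)}. In particular, if all δ_v are sufficiently small relative to A and N(l), then no such ξ generating F over K exists. -/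
/-!
Let `m = [F : K]`, let `P` be the minimal polynomial of `ξ` over `K`, and choose by Minkowski
`0 ≠ α ∈ 𝔩` with `|N(α)| ≤ C · N(𝔩)`, so that `α` and `ξα` are algebraic integers. Over the
ordered pairs `(φ, ψ)` of distinct complex embeddings of `F` that agree on `K`, the product of
`φ(ξα)ψ(α) - ψ(ξα)φ(α) = (φξ - ψξ) φα ψα` is the nonzero rational number
`N(P'(ξ)) · N(α)^{2(m-1)}`; being an algebraic integer, it has absolute value at least `1`.
On the other hand, as `K` is totally real, every non-real `φ` is paired with `conj φ`, and
such a pair contributes `2 |Im φξ| ≤ 2A √δ_v`, while every other pair contributes at most `2A`.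
Comparing the two bounds gives `1 ≤ (2A)^{n(m-1)} · ∏ δ_v · (C · N(𝔩))^{2(m-1)}`.
-/

open scoped Classical

open NumberField Polynomial Finset

section Embeddings

variable {K L E : Type*} [Field K] [Field L] [Field E] [Algebra K L] [Algebra K E]
  [FiniteDimensional K L]

theorem PowerBasis.aroots_minpoly_gen_eq_map (pb : PowerBasis K L) (hsep : IsSeparable K pb.gen) :
    (minpoly K pb.gen).aroots E = univ.val.map fun τ : L →ₐ[K] E => τ pb.gen := by
  refine (Multiset.Nodup.ext (nodup_roots (Separable.map hsep))
    (univ.nodup.map fun σ τ h => pb.algHom_ext h)).mpr fun x => ?_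
  simp only [Multiset.mem_map, mem_val, mem_univ, true_and]
  refine ⟨fun hx => ⟨pb.liftEquiv'.symm ⟨x, hx⟩, ?_⟩, fun ⟨τ, hτ⟩ => hτ ▸ (pb.liftEquiv' τ).2⟩
  rw [← pb.liftEquiv'_apply_coe, Equiv.apply_symm_apply]

theorem PowerBasis.algHom_aeval_derivative_minpoly_gen [IsAlgClosed E] (pb : PowerBasis K L)
    (hsep : IsSeparable K pb.gen) (σ : L →ₐ[K] E) :
    σ (aeval pb.gen (minpoly K pb.gen).derivative) =
      ∏ τ ∈ univ.erase σ, (σ pb.gen - τ pb.gen) := by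
  have hinj : Function.Injective fun τ : L →ₐ[K] E => τ pb.gen := fun σ τ h => pb.algHom_ext h
  have hroot : σ pb.gen ∈ (minpoly K pb.gen).aroots E := by
    rw [pb.aroots_minpoly_gen_eq_map hsep]
    exact Multiset.mem_map_of_mem _ (mem_univ σ)
  rw [← aeval_algHom_apply, aeval_def, eval₂_eq_eval_map, ← derivative_map,
    (IsAlgClosed.splits _).eval_root_derivative ((minpoly.monic pb.isIntegral_gen).map _) hroot,
    ← aroots_def, pb.aroots_minpoly_gen_eq_map hsep, ← Multiset.map_erase _ hinj,
    Multiset.map_map]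
  rfl

theorem filter_comp_algebraMap_eq_map [Fintype (L →+* E)] :
    ({ψ : L →+* E | ψ.comp (algebraMap K L) = algebraMap K E} : Finset _) =
      univ.map ⟨((↑) : (L →ₐ[K] E) → L →+* E), AlgHom.coe_ringHom_injective⟩ := by
  ext ψ
  simp only [mem_filter, mem_univ, true_and, mem_map, Function.Embedding.coeFn_mk]
  exact ⟨fun h => ⟨{ ψ with commutes' := fun r => congrArg (· r) h }, rfl⟩,
    fun ⟨τ, hτ⟩ => hτ ▸ τ.comp_algebraMap⟩

end Embeddings

section RingHom

variable {K L E : Type*} [Field K] [Field L] [Field E] [Algebra K L] [FiniteDimensional K L]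
  [Fintype (L →+* E)]

theorem card_erase_filter_comp_algebraMap [IsAlgClosed E] [Algebra.IsSeparable K L]
    (φ : L →+* E) :
    #(({ψ : L →+* E | ψ.comp (algebraMap K L) = φ.comp (algebraMap K L)} : Finset _).erase φ) =
      Module.finrank K L - 1 := by
  let : Algebra K E := (φ.comp (algebraMap K L)).toAlgebra
  rw [card_erase_of_mem (by simp)]
  exact congrArg (· - 1) ((congrArg card filter_comp_algebraMap_eq_map).trans
    ((card_map _).trans (AlgHom.card K L E)))

theorem ringHom_aeval_derivative_minpoly [IsAlgClosed E] [Algebra.IsSeparable K L] {ξ : L}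
    (hξ : IntermediateField.adjoin K {ξ} = ⊤) (φ : L →+* E) :
    φ (aeval ξ (minpoly K ξ).derivative) =
      ∏ ψ ∈ ({ψ : L →+* E | ψ.comp (algebraMap K L) = φ.comp (algebraMap K L)} : Finset _).erase φ,
        (φ ξ - ψ ξ) := by
  let : Algebra K E := (φ.comp (algebraMap K L)).toAlgebra
  let σ : L →ₐ[K] E := { φ with commutes' := fun _ => rfl }
  let pb := PowerBasis.ofAdjoinEqTop (Algebra.IsIntegral.isIntegral ξ)
    (Algebra.adjoin_eq_top_of_primitive_element (Algebra.IsAlgebraic.isAlgebraic ξ) hξ)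
  change σ (aeval pb.gen (minpoly K pb.gen).derivative) =
    ∏ ψ ∈ ({ψ : L →+* E | ψ.comp (algebraMap K L) = algebraMap K E} : Finset _).erase ↑σ,
      (σ pb.gen - ψ pb.gen)
  rw [pb.algHom_aeval_derivative_minpoly_gen (Algebra.IsSeparable.isSeparable K ξ),
    filter_comp_algebraMap_eq_map]
  refine (prod_map (univ.erase σ) ⟨_, AlgHom.coe_ringHom_injective⟩
    fun ψ => σ pb.gen - ψ pb.gen).symm.trans ?_
  rw [map_erase]
  rfl

end RingHom

theorem one_le_abs_of_isIntegral_algebraMap {A : Type*} [Ring A] [Nontrivial A] [Algebra ℚ A]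
    {q : ℚ} (hq : q ≠ 0) (h : IsIntegral ℤ (algebraMap ℚ A q)) : 1 ≤ |q| := by
  obtain ⟨z, rfl⟩ := IsIntegrallyClosed.isIntegral_iff.mp
    ((isIntegral_algHom_iff (algebraMap ℚ A).toIntAlgHom (algebraMap ℚ A).injective).mp h)
  have hz : z ≠ 0 := by rintro rfl; exact hq (map_zero _)
  rw [eq_intCast]
  exact_mod_cast Int.one_le_abs hz

theorem NumberField.algebraMap_norm_eq_prod_ringHom {F : Type*} [Field F] [NumberField F]
    (x : F) : algebraMap ℚ ℂ (Algebra.norm ℚ x) = ∏ φ : F →+* ℂ, φ x :=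
  (Algebra.norm_eq_prod_embeddings ℚ ℂ x).trans
    (Fintype.prod_equiv (RingHom.equivRatAlgHom F ℂ).symm _ _ fun _ => rfl)

section ComplexPlaces

open InfinitePlace ComplexEmbedding

variable {F : Type*} [Field F]

theorem NumberField.InfinitePlace.abs_im_embedding_mk (φ : F →+* ℂ) (x : F) :
    |((mk φ).embedding x).im| = |(φ x).im| := by
  rcases embedding_mk_eq φ with h | h <;> simp [h, conjugate_coe_eq]

theorem prod_filter_not_isReal_mk [NumberField F] {M : Type*} [CommMonoid M]
    (f : InfinitePlace F → M) :
    ∏ φ ∈ ({φ | ¬IsReal φ} : Finset (F →+* ℂ)), f (mk φ) =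
      ∏ w ∈ ({w | ¬w.IsReal} : Finset (InfinitePlace F)), f w ^ 2 := by
  rw [← prod_fiberwise_of_maps_to (g := InfinitePlace.mk) (t := {w | ¬w.IsReal})
    fun φ hφ => by simpa [← not_isReal_iff_isComplex, isReal_mk_iff] using hφ]
  refine prod_congr rfl fun w hw => ?_
  have hfiber : ({φ | ¬IsReal φ} : Finset (F →+* ℂ)).filter (InfinitePlace.mk · = w) =
      univ.filter (InfinitePlace.mk · = w) := by
    ext φ
    simp only [mem_filter, mem_univ, true_and, and_iff_right_iff_imp]
    rintro rfl
    simpa [← not_isReal_iff_isComplex, isReal_mk_iff] using hw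
  have hw : ¬w.IsReal := by simpa using hw
  rw [hfiber, prod_congr rfl fun φ hφ => by rw [(mem_filter.mp hφ).2], prod_const,
    card_filter_mk_eq, mult, if_neg hw]

end ComplexPlaces

section ConjugatePairs

variable (K F : Type*) [Field K] [Field F] [NumberField F] [Algebra K F]

noncomputable def conjugatePairs : Finset ((F →+* ℂ) × (F →+* ℂ)) :=
  {p | p.2.comp (algebraMap K F) = p.1.comp (algebraMap K F) ∧ p.2 ≠ p.1}

variable {K F}

@[to_additive]
theorem prod_conjugatePairs {M : Type*} [CommMonoid M] (g : (F →+* ℂ) × (F →+* ℂ) → M) :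
    ∏ p ∈ conjugatePairs K F, g p = ∏ φ : F →+* ℂ,
      ∏ ψ ∈ ({ψ : F →+* ℂ | ψ.comp (algebraMap K F) = φ.comp (algebraMap K F)} : Finset _).erase φ,
        g (φ, ψ) := by
  rw [conjugatePairs, prod_filter, ← univ_product_univ, prod_product]
  refine prod_congr rfl fun φ _ => ?_
  rw [← filter_ne', filter_filter, prod_filter]

theorem prod_conjugatePairs_snd {M : Type*} [CommMonoid M] (f : (F →+* ℂ) → M) :
    ∏ p ∈ conjugatePairs K F, f p.2 = ∏ p ∈ conjugatePairs K F, f p.1 :=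
  prod_equiv (Equiv.prodComm _ _) (by simp [conjugatePairs, eq_comm]) fun _ _ => rfl

variable [FiniteDimensional K F] [Algebra.IsSeparable K F]

theorem card_conjugatePairs :
    #(conjugatePairs K F) = Module.finrank ℚ F * (Module.finrank K F - 1) := by
  rw [card_eq_sum_ones, sum_conjugatePairs]
  simp only [sum_const, card_erase_filter_comp_algebraMap, smul_eq_mul, mul_one, card_univ,
    NumberField.Embeddings.card]

theorem prod_conjugatePairs_fst {M : Type*} [CommMonoid M] (f : (F →+* ℂ) → M) :
    ∏ p ∈ conjugatePairs K F, f p.1 = (∏ φ, f φ) ^ (Module.finrank K F - 1) := by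
  rw [prod_conjugatePairs, ← prod_pow]
  exact prod_congr rfl fun φ _ => by simp only [prod_const, card_erase_filter_comp_algebraMap]

theorem prod_conjugatePairs_sub {ξ : F} (hξ : IntermediateField.adjoin K {ξ} = ⊤) :
    ∏ p ∈ conjugatePairs K F, (p.1 ξ - p.2 ξ) =
      algebraMap ℚ ℂ (Algebra.norm ℚ (aeval ξ (minpoly K ξ).derivative)) := by
  rw [prod_conjugatePairs, NumberField.algebraMap_norm_eq_prod_ringHom]
  exact prod_congr rfl fun φ _ => (ringHom_aeval_derivative_minpoly hξ φ).symm

theorem prod_conjugatePairs_mul (α : F) :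
    ∏ p ∈ conjugatePairs K F, (p.1 α * p.2 α) =
      algebraMap ℚ ℂ (Algebra.norm ℚ α ^ (2 * (Module.finrank K F - 1))) := by
  rw [prod_mul_distrib, prod_conjugatePairs_snd (· α), ← sq, prod_conjugatePairs_fst fun φ => φ α,
    map_pow, NumberField.algebraMap_norm_eq_prod_ringHom, ← pow_mul, mul_comm]

theorem one_le_prod_norm_sub_mul_abs_norm_pow {ξ α : F} (hξ : IntermediateField.adjoin K {ξ} = ⊤)
    (hα : α ≠ 0) (hαint : IsIntegral ℤ α) (hξαint : IsIntegral ℤ (ξ * α)) :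
    1 ≤ (∏ p ∈ conjugatePairs K F, ‖p.1 ξ - p.2 ξ‖) *
      |(Algebra.norm ℚ α : ℝ)| ^ (2 * (Module.finrank K F - 1)) := by
  set d := Algebra.norm ℚ (aeval ξ (minpoly K ξ).derivative)
  set M := d * Algebra.norm ℚ α ^ (2 * (Module.finrank K F - 1))
  have hd : d ≠ 0 := Algebra.norm_ne_zero_iff.mpr
    ((Algebra.IsSeparable.isSeparable K ξ).aeval_derivative_ne_zero (minpoly.aeval K ξ))
  have hM0 : M ≠ 0 := mul_ne_zero hd (pow_ne_zero _ (Algebra.norm_ne_zero_iff.mpr hα))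
  have hMint : IsIntegral ℤ (algebraMap ℚ ℂ M) := by
    rw [map_mul, ← prod_conjugatePairs_sub hξ, ← prod_conjugatePairs_mul, ← prod_mul_distrib]
    refine IsIntegral.prod _ fun p _ => ?_
    have hfactor : (p.1 ξ - p.2 ξ) * (p.1 α * p.2 α) =
        p.1 (ξ * α) * p.2 α - p.2 (ξ * α) * p.1 α := by
      simp only [map_mul]; ring
    rw [hfactor]
    exact ((hξαint.map p.1.toIntAlgHom).mul (hαint.map p.2.toIntAlgHom)).sub
      ((hξαint.map p.2.toIntAlgHom).mul (hαint.map p.1.toIntAlgHom))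
  have hdnorm : |(d : ℝ)| = ∏ p ∈ conjugatePairs K F, ‖p.1 ξ - p.2 ξ‖ := by
    rw [← norm_prod, prod_conjugatePairs_sub hξ, eq_ratCast, Complex.norm_ratCast]
  calc (1 : ℝ) ≤ |(M : ℝ)| := by exact_mod_cast one_le_abs_of_isIntegral_algebraMap hM0 hMint
    _ = _ := by rw [← hdnorm, Rat.cast_mul, Rat.cast_pow, abs_mul, abs_pow]

open InfinitePlace ComplexEmbedding in
theorem prod_conjugatePairs_norm_sub_le
    (hK : ∀ (φ : F →+* ℂ) (x : K), (φ (algebraMap K F x)).im = 0) {ξ : F} {A : ℝ} (hA : 0 ≤ A)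
    {δ : InfinitePlace F → ℝ} (hδ : ∀ v, 0 ≤ δ v)
    (hbound : ∀ v : InfinitePlace F,
      ‖v.embedding ξ‖ ≤ A ∧ |(v.embedding ξ).im| ≤ A * Real.sqrt (δ v)) :
    ∏ p ∈ conjugatePairs K F, ‖p.1 ξ - p.2 ξ‖ ≤
      (2 * A) ^ (Module.finrank ℚ F * (Module.finrank K F - 1)) *
        ∏ v ∈ ({v | ¬v.IsReal} : Finset (InfinitePlace F)), δ v := by
  set T₀ := ({φ | ¬IsReal φ} : Finset (F →+* ℂ)).map
    ⟨fun φ => (φ, conjugate φ), fun φ ψ h => congrArg Prod.fst h⟩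
  have hT₀ : T₀ ⊆ conjugatePairs K F := by
    intro p hp
    obtain ⟨φ, hφ, rfl⟩ := mem_map.mp hp
    simp only [conjugatePairs, mem_filter, mem_univ, true_and]
    refine ⟨RingHom.ext fun x => ?_, fun h => (mem_filter.mp hφ).2 (isReal_iff.mpr h)⟩
    change conjugate φ (algebraMap K F x) = φ (algebraMap K F x)
    rw [conjugate_coe_eq, Complex.conj_eq_iff_im.mpr (hK φ x)]
  have hnorm (φ : F →+* ℂ) : ‖φ ξ‖ ≤ A := by
    rw [← apply, ← norm_embedding_eq]
    exact (hbound _).1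
  have hconj (φ : F →+* ℂ) : ‖φ ξ - conjugate φ ξ‖ ≤ 2 * A * Real.sqrt (δ (mk φ)) := by
    rw [conjugate_coe_eq, Complex.sub_conj, norm_mul, Complex.norm_I, mul_one, Complex.norm_real,
      Real.norm_eq_abs, abs_mul, abs_two, ← abs_im_embedding_mk, mul_assoc]
    exact mul_le_mul_of_nonneg_left (hbound _).2 two_pos.le
  calc ∏ p ∈ conjugatePairs K F, ‖p.1 ξ - p.2 ξ‖
      = (∏ p ∈ conjugatePairs K F \ T₀, ‖p.1 ξ - p.2 ξ‖) * ∏ p ∈ T₀, ‖p.1 ξ - p.2 ξ‖ :=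
        (prod_sdiff hT₀).symm
    _ ≤ (2 * A) ^ #(conjugatePairs K F \ T₀) *
          ∏ φ ∈ ({φ | ¬IsReal φ} : Finset (F →+* ℂ)), 2 * A * Real.sqrt (δ (mk φ)) := by
        rw [prod_map]
        gcongr ?_ * ?_
        · exact (prod_le_prod (fun _ _ => norm_nonneg _)
            fun p _ => (norm_sub_le _ _).trans (by linarith [hnorm p.1, hnorm p.2])).trans_eq
            (prod_const _)
        · exact prod_le_prod (fun _ _ => norm_nonneg _) fun φ _ => hconj φ
    _ = (2 * A) ^ #(conjugatePairs K F) *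
          ∏ φ ∈ ({φ | ¬IsReal φ} : Finset (F →+* ℂ)), Real.sqrt (δ (mk φ)) := by
        rw [prod_mul_distrib, prod_const, ← mul_assoc, ← pow_add,
          show #({φ | ¬IsReal φ} : Finset (F →+* ℂ)) = #T₀ from (card_map _).symm,
          card_sdiff_add_card_eq_card hT₀]
    _ = _ := by
        rw [card_conjugatePairs, prod_filter_not_isReal_mk fun v => Real.sqrt (δ v)]
        simp_rw [Real.sq_sqrt (hδ _)]

end ConjugatePairs

theorem NumberField.exists_forall_exists_ne_zero_mem_ideal_abs_norm_le (F : Type*) [Field F]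
    [NumberField F] :
    ∃ C : ℝ, 0 < C ∧ ∀ l : Ideal (𝓞 F), l ≠ 0 →
      ∃ a ∈ l, a ≠ 0 ∧ |(Algebra.norm ℚ (a : F) : ℝ)| ≤ C * Ideal.absNorm l := by
  refine ⟨(4 / Real.pi) ^ InfinitePlace.nrComplexPlaces F * (Module.finrank ℚ F).factorial /
    Module.finrank ℚ F ^ Module.finrank ℚ F * Real.sqrt |(discr F : ℝ)|, ?_, fun l hl => ?_⟩
  · have : 0 < Real.sqrt |(discr F : ℝ)| := by
      simpa [Real.sqrt_pos, abs_pos] using discr_ne_zero F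
    have : 0 < Module.finrank ℚ F := Module.finrank_pos
    positivity
  have hl' : (l : FractionalIdeal (nonZeroDivisors (𝓞 F)) F) ≠ 0 := by simpa using hl
  obtain ⟨x, hx, hx0, hxN⟩ := exists_ne_zero_mem_ideal_of_norm_le_mul_sqrt_discr F (Units.mk0 _ hl')
  obtain ⟨a, ha, rfl⟩ := (FractionalIdeal.mem_coeIdeal _).mp hx
  refine ⟨a, ha, by rintro rfl; simp at hx0, ?_⟩
  rw [Units.val_mk0, FractionalIdeal.coeIdeal_absNorm, Rat.cast_abs] at hxN
  exact hxN.trans (le_of_eq (by push_cast; ring))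

theorem NumberField.isIntegral_mul_of_spanSingleton_mul_eq {F : Type*} [Field F] [NumberField F]
    {ξ : F} {k l : Ideal (𝓞 F)}
    (h : FractionalIdeal.spanSingleton (nonZeroDivisors (𝓞 F)) ξ *
      (l : FractionalIdeal (nonZeroDivisors (𝓞 F)) F) = k)
    {a : 𝓞 F} (ha : a ∈ l) : IsIntegral ℤ (ξ * a) := by
  obtain ⟨b, -, hb⟩ := (FractionalIdeal.mem_coeIdeal _).mp
    (h ▸ FractionalIdeal.mul_mem_mul (FractionalIdeal.mem_spanSingleton_self _ ξ)
      ((FractionalIdeal.mem_coeIdeal _).mpr ⟨a, ha, rfl⟩))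
  exact hb ▸ RingOfIntegers.isIntegral_coe b

theorem realness_rigidity_contrapositive_general
    (F : Type*) [Field F] [NumberField F]
    (K : IntermediateField ℚ F)
    (hK : ∀ x : F, x ∈ K ↔ ∀ φ : F →+* ℂ, (φ x).im = 0) :
    ∃ c : ℝ, 0 < c ∧
      ∀ (ξ : F), IntermediateField.adjoin K {ξ} = ⊤ →
      ∀ (k l : Ideal (𝓞 F)), l ≠ 0 →
        FractionalIdeal.spanSingleton (nonZeroDivisors (𝓞 F)) ξ *
            (l : FractionalIdeal (nonZeroDivisors (𝓞 F)) F) =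
          (k : FractionalIdeal (nonZeroDivisors (𝓞 F)) F) →
      ∀ (A : ℝ), 1 ≤ A → ∀ (δ : InfinitePlace F → ℝ), (∀ v, 0 < δ v) →
        (∀ v : InfinitePlace F,
          ‖v.embedding ξ‖ ≤ A ∧ |(v.embedding ξ).im| ≤ A * Real.sqrt (δ v)) →
        c * (((2 * A) ^ (Module.finrank ℚ F) * (Ideal.absNorm l : ℝ) ^ 2) ^
              (2 * (Module.finrank K F - 1)))⁻¹ ≤
          ∏ v ∈ Finset.univ.filter (fun v : InfinitePlace F => ¬ v.IsReal), δ v := by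
  obtain ⟨C, hC, hmink⟩ := exists_forall_exists_ne_zero_mem_ideal_abs_norm_le F
  set e := Module.finrank K F - 1
  refine ⟨(C ^ (2 * e))⁻¹, by positivity, fun ξ hξ k l hl hkl A hA δ hδ hbound => ?_⟩
  obtain ⟨a, hal, ha0, haN⟩ := hmink l hl
  have hlower := one_le_prod_norm_sub_mul_abs_norm_pow hξ (by simpa using ha0)
    (RingOfIntegers.isIntegral_coe a) (isIntegral_mul_of_spanSingleton_mul_eq hkl hal)
  have hupper := prod_conjugatePairs_norm_sub_le (K := K) (fun φ x => (hK x).mp x.2 φ)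
    (by linarith) (fun v => (hδ v).le) hbound
  have hN : (1 : ℝ) ≤ Ideal.absNorm l := by
    exact_mod_cast Nat.one_le_iff_ne_zero.mpr (Ideal.absNorm_eq_zero_iff.not.mpr hl)
  set B := (2 * A) ^ Module.finrank ℚ F * (Ideal.absNorm l : ℝ) ^ 2
  have hB : 1 ≤ B := one_le_mul_of_one_le_of_one_le (one_le_pow₀ (by linarith)) (one_le_pow₀ hN)
  have hP : 0 ≤ ∏ v ∈ univ.filter (¬ ·.IsReal), δ v := prod_nonneg fun v _ => (hδ v).le
  rw [← mul_inv, inv_le_iff_one_le_mul₀' (by positivity)]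
  calc (1 : ℝ) ≤ _ := hlower
    _ ≤ (2 * A) ^ (Module.finrank ℚ F * e) * (∏ v ∈ univ.filter (¬ ·.IsReal), δ v) *
          (C * Ideal.absNorm l) ^ (2 * e) := by gcongr
    _ = C ^ (2 * e) * B ^ e * ∏ v ∈ univ.filter (¬ ·.IsReal), δ v := by ring
    _ ≤ C ^ (2 * e) * B ^ (2 * e) * ∏ v ∈ univ.filter (¬ ·.IsReal), δ v := by
        gcongr
        omega

/-- (Contrapositive form of realness rigidity.) Let `F` be a number field
that is not totally real, with maximal totally real subfield `K` and `m = [F : K] ≥ 2`.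
There is a constant `c > 0` depending only on `F` such that whenever `ξ ∈ F` generates `F`
over `K`, satisfies `|ξ_v| ≤ A` and `|Im ξ_v| ≤ A √(δ_v)` at every archimedean place `v`
(with `A ≥ 1`, `δ_v > 0`), and `ξ·𝓞_F = 𝔨/𝔩` with integral ideals, then
`∏_{v complex} δ_v ≥ c · ((2A)^n · N(𝔩)²)^{-2(m-1)}`. -/
theorem realness_rigidity_contrapositive
    (F : Type*) [Field F] [NumberField F]
    (K : IntermediateField ℚ F)
    (hK : ∀ x : F, x ∈ K ↔ ∀ φ : F →+* ℂ, (φ x).im = 0)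
    (hm : 2 ≤ Module.finrank K F) :
    ∃ c : ℝ, 0 < c ∧
      ∀ (ξ : F), IntermediateField.adjoin K {ξ} = ⊤ →
      ∀ (k l : Ideal (𝓞 F)), l ≠ 0 →
        FractionalIdeal.spanSingleton (nonZeroDivisors (𝓞 F)) ξ *
            (l : FractionalIdeal (nonZeroDivisors (𝓞 F)) F) =
          (k : FractionalIdeal (nonZeroDivisors (𝓞 F)) F) →
      ∀ (A : ℝ), 1 ≤ A → ∀ (δ : InfinitePlace F → ℝ), (∀ v, 0 < δ v) →
        (∀ v : InfinitePlace F,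
          ‖v.embedding ξ‖ ≤ A ∧ |(v.embedding ξ).im| ≤ A * Real.sqrt (δ v)) →
        c * (((2 * A) ^ (Module.finrank ℚ F) * (Ideal.absNorm l : ℝ) ^ 2) ^
              (2 * (Module.finrank K F - 1)))⁻¹ ≤
          ∏ v ∈ Finset.univ.filter (fun v : InfinitePlace F => ¬ v.IsReal), δ v :=
  realness_rigidity_contrapositive_general F K hK
end

section
/- Let F be a number field of degree n, and let Λ be a lattice in a 2n-dimensional real Euclidean space M that is invariant under a ring action of O_F on M by linear isometry-bounded maps, in the following sense: Λ = O_F·Q + O_F·Q' need not hold, but Λ is stable under multiplication by O_F, and there is a constant C (depending only on a Z-basis u_1,…,u_n of O_F and the operator norms of the u_i actions) such that ‖u·w‖ ≤ C‖w‖ for all u in the fixed basis and w ∈ M. Then the successive minima m_1 ≤ m_2 ≤ … ≤ m_{2n} of Λ satisfy m_n ≤ C'·m_1 and m_{2n} ≤ C'·m_{n+1} for a constant C' depending only on C and n. -/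
/-!
If `Q ≠ 0` lies in `Λ`, the vectors `u_i • Q` for a `ℤ`-basis `u_i` of `𝓞 F` are `ℤ`-independent
lattice vectors, hence `ℝ`-independent because `Λ` is discrete, and they have norm at most
`C ‖Q‖`; this gives `m_n ≤ C m_1`. Among `n + 1` independent lattice vectors two are
`F`-independent, since an `F`-line is only `n`-dimensional over `ℚ`; the `2n` vectors
`u_i • x`, `u_i • y` then give `m_{2n} ≤ C m_{n+1}`.
-/

open NumberField

/-- The `k`-th successive minimum of a lattice `Λ` in a real normed space: the infimum of
the radii `r ≥ 0` such that `Λ` contains `k` linearly independent vectors of norm `≤ r`. -/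
noncomputable def succMin {E : Type*} [NormedAddCommGroup E] [NormedSpace ℝ E]
    (Λ : Submodule ℤ E) (k : ℕ) : ℝ :=
  sInf {r : ℝ | 0 ≤ r ∧ ∃ s : Finset E, ↑s ⊆ (Λ : Set E) ∧
    LinearIndependent ℝ (fun x : s => (x : E)) ∧ s.card = k ∧ ∀ x ∈ s, ‖x‖ ≤ r}

open Module Submodule

section Lattice

variable {E : Type*} [NormedAddCommGroup E] [NormedSpace ℝ E] (Λ : Submodule ℤ E)

def succMinRadii (k : ℕ) : Set ℝ :=
  {r : ℝ | 0 ≤ r ∧ ∃ s : Finset E, ↑s ⊆ (Λ : Set E) ∧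
    LinearIndependent ℝ (fun x : s => (x : E)) ∧ s.card = k ∧ ∀ x ∈ s, ‖x‖ ≤ r}

theorem succMin_eq_sInf_succMinRadii (k : ℕ) : succMin Λ k = sInf (succMinRadii Λ k) := rfl

variable {Λ}

theorem LinearIndependent.real_of_int_of_mem [FiniteDimensional ℝ E] [DiscreteTopology Λ]
    {ι : Type*} [Fintype ι] {w : ι → E} (hw : LinearIndependent ℤ w) (hwΛ : ∀ i, w i ∈ Λ) :
    LinearIndependent ℝ w := by
  have hspan : (span ℤ (Set.range w) : Set E) ⊆ Λ :=
    span_le.mpr (Set.range_subset_iff.mpr hwΛ)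
  have : DiscreteTopology (span ℤ (Set.range w)) :=
    DiscreteTopology.of_subset (s := (Λ : Set E)) inferInstance hspan
  rw [linearIndependent_iff_card_eq_finrank_span, Real.finrank_eq_int_finrank_of_discrete this]
  exact (finrank_span_eq_card hw).symm

theorem mem_succMinRadii {ι : Type*} [Fintype ι] {w : ι → E} (hw : LinearIndependent ℝ w)
    (hwΛ : ∀ i, w i ∈ Λ) {r : ℝ} (hr : 0 ≤ r) (hwr : ∀ i, ‖w i‖ ≤ r) :
    r ∈ succMinRadii Λ (Fintype.card ι) := by
  classical
  refine ⟨hr, Finset.univ.image w, ?_, ?_, ?_, ?_⟩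
  · simpa [Set.range_subset_iff] using hwΛ
  · show LinearIndepOn ℝ id ((Finset.univ.image w : Finset E) : Set E)
    rw [Finset.coe_image, Finset.coe_univ, Set.image_univ]
    exact (linearIndepOn_id_range_iff hw.injective).mpr hw
  · exact Finset.card_image_of_injective _ hw.injective
  · simpa using hwr

theorem succMin_le {ι : Type*} [Fintype ι] {w : ι → E} (hw : LinearIndependent ℝ w)
    (hwΛ : ∀ i, w i ∈ Λ) {r : ℝ} (hr : 0 ≤ r) (hwr : ∀ i, ‖w i‖ ≤ r) :
    succMin Λ (Fintype.card ι) ≤ r := by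
  rw [succMin_eq_sInf_succMinRadii]
  exact csInf_le ⟨0, fun _ hx => hx.1⟩ (mem_succMinRadii hw hwΛ hr hwr)

theorem succMinRadii_nonempty [FiniteDimensional ℝ E] [DiscreteTopology Λ] [IsZLattice ℝ Λ]
    {k : ℕ} (hk : k ≤ finrank ℝ E) : (succMinRadii Λ k).Nonempty := by
  let B := Module.finBasis ℤ Λ
  let w : Fin k → E := fun i => B (Fin.castLE (by rwa [ZLattice.rank ℝ Λ]) i)
  have hw : LinearIndependent ℤ w :=
    (B.linearIndependent.comp _ (Fin.castLE_injective _)).map' Λ.subtype Λ.ker_subtype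
  have hwΛ : ∀ i, w i ∈ Λ := fun i => (B _).2
  have hmem := mem_succMinRadii (hw.real_of_int_of_mem hwΛ) hwΛ (by positivity : 0 ≤ ∑ i, ‖w i‖)
    fun i => Finset.single_le_sum (fun j _ => norm_nonneg (w j)) (Finset.mem_univ i)
  exact ⟨_, by rwa [Fintype.card_fin] at hmem⟩

theorem succMin_le_mul_succMin [FiniteDimensional ℝ E] [DiscreteTopology Λ] [IsZLattice ℝ Λ]
    {k₀ k₁ : ℕ} (hk₀ : k₀ ≤ finrank ℝ E) {c : ℝ} (hc : 0 < c)
    (h : ∀ r ∈ succMinRadii Λ k₀, succMin Λ k₁ ≤ c * r) :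
    succMin Λ k₁ ≤ c * succMin Λ k₀ := by
  rw [← div_le_iff₀' hc, succMin_eq_sInf_succMinRadii Λ k₀]
  exact le_csInf (succMinRadii_nonempty hk₀) fun r hr => (div_le_iff₀' hc).mpr (h r hr)

end Lattice

section NumberField

variable {F E : Type*} [Field F] [AddCommGroup E] [Module F E]

theorem exists_pair_linearIndependent [CharZero F] [FiniteDimensional ℚ F] {s : Finset E}
    (hs : LinearIndependent ℤ (fun x : s => (x : E))) (hcard : finrank ℚ F < s.card) :
    ∃ x ∈ s, ∃ y ∈ s, LinearIndependent F ![x, y] := by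
  classical
  by_contra! h
  obtain ⟨x₀, hx₀⟩ : s.Nonempty := Finset.card_pos.mp (by omega)
  have hx₀0 : x₀ ≠ 0 := hs.ne_zero ⟨x₀, hx₀⟩
  have hmul : ∀ y ∈ s, ∃ a : F, a • x₀ = y := by
    intro y hy
    by_contra! hne
    exact h y hy x₀ hx₀ (linearIndependent_fin2.mpr ⟨by simpa, by simpa using hne⟩)
  choose! a ha using hmul
  have ha_indep : LinearIndependent ℤ (fun y : s => a y) := by
    refine LinearIndependent.of_comp ((LinearMap.toSpanSingleton F E x₀).restrictScalars ℤ) ?_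
    convert hs with y
    exact ha y y.2
  have := ((LinearIndependent.iff_fractionRing ℤ ℚ).mp ha_indep).fintype_card_le_finrank
  simp only [Fintype.card_coe] at this
  omega

theorem linearIndependent_smul_ringOfIntegers [NumberField F] {ι κ : Type*}
    (b : Basis ι ℤ (𝓞 F)) {v : κ → E} (hv : LinearIndependent F v) :
    LinearIndependent ℤ (fun p : ι × κ => algebraMap (𝓞 F) F (b p.1) • v p.2) := by
  have hb : LinearIndependent ℤ (fun i => algebraMap (𝓞 F) F (b i)) :=
    b.linearIndependent.map' ((Algebra.linearMap (𝓞 F) F).restrictScalars ℤ)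
      (LinearMap.ker_eq_bot.mpr RingOfIntegers.coe_injective)
  exact linearIndependent_smul (R := ℤ) (A := E) (b := fun i => algebraMap (𝓞 F) F (b i)) hb hv

end NumberField

theorem succMin_card_mul_le_of_linearIndependent {F E : Type*} [Field F] [NumberField F]
    [NormedAddCommGroup E] [NormedSpace ℝ E] [FiniteDimensional ℝ E] [Module F E]
    {Λ : Submodule ℤ E} [DiscreteTopology Λ] {ι κ : Type*} [Fintype ι] [Fintype κ]
    (b : Basis ι ℤ (𝓞 F)) (hΛ : ∀ i, ∀ x ∈ Λ, algebraMap (𝓞 F) F (b i) • x ∈ Λ)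
    {c : ℝ} (hc : 0 ≤ c) (hb : ∀ i (x : E), ‖algebraMap (𝓞 F) F (b i) • x‖ ≤ c * ‖x‖)
    {v : κ → E} (hv : LinearIndependent F v) (hvΛ : ∀ k, v k ∈ Λ) {r : ℝ} (hr : 0 ≤ r)
    (hvr : ∀ k, ‖v k‖ ≤ r) :
    succMin Λ (Fintype.card ι * Fintype.card κ) ≤ c * r := by
  have hmem : ∀ p : ι × κ, algebraMap (𝓞 F) F (b p.1) • v p.2 ∈ Λ :=
    fun p => hΛ p.1 _ (hvΛ p.2)
  rw [← Fintype.card_prod]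
  exact succMin_le ((linearIndependent_smul_ringOfIntegers b hv).real_of_int_of_mem hmem) hmem
    (mul_nonneg hc hr) fun p => (hb _ _).trans (mul_le_mul_of_nonneg_left (hvr p.2) hc)

theorem succMin_comparison_general (n : ℕ) (C : ℝ) :
    ∃ C' : ℝ, 0 < C' ∧
      ∀ (F : Type) [Field F] [NumberField F], Module.finrank ℚ F = n →
      ∀ (E : Type) [NormedAddCommGroup E] [InnerProductSpace ℝ E],
        Module.finrank ℝ E = 2 * n →
      ∀ [Module F E] [SMulCommClass F ℝ E],
      ∀ (b : Module.Basis (Fin n) ℤ (𝓞 F)),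
      ∀ (Λ : Submodule ℤ E) [DiscreteTopology Λ] [IsZLattice ℝ Λ],
        (∀ (u : 𝓞 F), ∀ x ∈ Λ, (algebraMap (𝓞 F) F u) • x ∈ Λ) →
        (∀ (i : Fin n) (x : E), ‖(algebraMap (𝓞 F) F (b i)) • x‖ ≤ C * ‖x‖) →
        succMin Λ n ≤ C' * succMin Λ 1 ∧
          succMin Λ (2 * n) ≤ C' * succMin Λ (n + 1) := by
  refine ⟨max C 1, by positivity, ?_⟩
  intro F _ _ hF E _ _ hE _ _ b Λ _ _ hΛ hC
  replace hΛ : ∀ i, ∀ x ∈ Λ, algebraMap (𝓞 F) F (b i) • x ∈ Λ := fun i => hΛ (b i)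
  have hn : 0 < n := hF ▸ finrank_pos
  have : FiniteDimensional ℝ E := Module.finite_of_finrank_pos (by omega)
  have hb : ∀ i x, ‖algebraMap (𝓞 F) F (b i) • x‖ ≤ max C 1 * ‖x‖ :=
    fun i x => (hC i x).trans (by gcongr; exact le_max_left C 1)
  constructor
  · refine succMin_le_mul_succMin (by omega) (by positivity) ?_
    rintro r ⟨hr, s, hsΛ, hs, hcard, hsr⟩
    obtain ⟨Q, rfl⟩ := Finset.card_eq_one.mp hcard
    have hQ : Q ∈ ({Q} : Finset E) := Finset.mem_singleton_self Q
    have hQF : LinearIndependent F fun _ : Unit => Q :=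
      linearIndependent_unique_iff.mpr (hs.ne_zero ⟨Q, hQ⟩)
    simpa using succMin_card_mul_le_of_linearIndependent b hΛ (by positivity) hb hQF
      (fun _ => hsΛ hQ) hr fun _ => hsr Q hQ
  · refine succMin_le_mul_succMin (by omega) (by positivity) ?_
    rintro r ⟨hr, s, hsΛ, hs, hcard, hsr⟩
    obtain ⟨x, hx, y, hy, hxy⟩ :=
      exists_pair_linearIndependent (F := F) (hs.restrict_scalars' ℤ) (by omega)
    have := succMin_card_mul_le_of_linearIndependent b hΛ (by positivity) hb hxy
      (Fin.forall_fin_two.mpr ⟨hsΛ hx, hsΛ hy⟩) hr (Fin.forall_fin_two.mpr ⟨hsr x hx, hsr y hy⟩)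
    rwa [Fintype.card_fin, Fintype.card_fin, mul_comm] at this

/-- Let `F` be a number field of degree `n` and let `Λ` be a lattice in a
`2n`-dimensional real Euclidean space `E` carrying a compatible `F`-module structure. If
`Λ` is stable under multiplication by `𝓞_F` and the multiplications by the elements of a
fixed `ℤ`-basis of `𝓞_F` are bounded in operator norm by `C`, then the successive minima
satisfy `m_n ≤ C' m_1` and `m_{2n} ≤ C' m_{n+1}` with `C'` depending only on `C` and `n`. -/
theorem succMin_comparison (n : ℕ) (hn : 0 < n) (C : ℝ) :
    ∃ C' : ℝ, 0 < C' ∧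
      ∀ (F : Type) [Field F] [NumberField F], Module.finrank ℚ F = n →
      ∀ (E : Type) [NormedAddCommGroup E] [InnerProductSpace ℝ E],
        Module.finrank ℝ E = 2 * n →
      ∀ [Module F E] [SMulCommClass F ℝ E],
      ∀ (b : Module.Basis (Fin n) ℤ (𝓞 F)),
      ∀ (Λ : Submodule ℤ E) [DiscreteTopology Λ] [IsZLattice ℝ Λ],
        (∀ (u : 𝓞 F), ∀ x ∈ Λ, (algebraMap (𝓞 F) F u) • x ∈ Λ) →
        (∀ (i : Fin n) (x : E), ‖(algebraMap (𝓞 F) F (b i)) • x‖ ≤ C * ‖x‖) →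
        succMin Λ n ≤ C' * succMin Λ 1 ∧
          succMin Λ (2 * n) ≤ C' * succMin Λ (n + 1) :=
  succMin_comparison_general n C
end
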